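/- arXiv:1301.2063 — 5 statements merged into one kernel-verified Lean document; each statement's English description precedes it below -/
import Mathlib

section
/- Let d > 0, λ > 0, and let f : [0,∞) → ℝ be locally Hölder continuous with inf_{x≥0} f(x) = f₀ > 0 and sup f < ∞. If u is a positive solution on (0,∞) of -d u'' = u(f(x) - λ u) with u(0) = 0, and there exists x₁ > 0 with u(x₁) > (sup f)/λ and u'(x₁) ≥ 0, then u blows up at some finite point; hence any positive solution defined on all of [0,∞) satisfies sup_{x≥0} u(x) ≤ (sup f)/λ. -/
/-!
Let `m = (sup f) / λ`. Where `u > m` the equation makes `u` strictly convex, so a point `c` with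
`u c > m` and `u' c > 0`, which exists before any point where `u > m` because `u 0 = 0 ≤ m`, is
a trap: beyond `c` the function `u` keeps increasing and satisfies `u'' ≥ k (u - u c)²` with
`k = λ / d`. For `v = u - u c` the energy `v'² - (2k/3) v³` is then nondecreasing and nonnegative
at `c`, so `v' ≥ √(2k/3) v^{3/2}`; hence `v^{-1/2}` decreases with slope at most
`-√(2k/3) / 2` and must reach `0` in finite time, which is absurd.
-/

open Set

section
variable {f f' : ℝ → ℝ} {D : Set ℝ}

lemma monotoneOn_of_hasDerivAt_nonneg (hD : Convex ℝ D) (hf : ∀ x ∈ D, HasDerivAt f (f' x) x)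
    (hf' : ∀ x ∈ interior D, 0 ≤ f' x) : MonotoneOn f D :=
  monotoneOn_of_hasDerivWithinAt_nonneg hD
    (fun x hx ↦ (hf x hx).continuousAt.continuousWithinAt)
    (fun x hx ↦ (hf x (interior_subset hx)).hasDerivWithinAt) hf'

lemma strictMonoOn_of_hasDerivAt_pos (hD : Convex ℝ D) (hf : ∀ x ∈ D, HasDerivAt f (f' x) x)
    (hf' : ∀ x ∈ interior D, 0 < f' x) : StrictMonoOn f D :=
  strictMonoOn_of_hasDerivWithinAt_pos hD
    (fun x hx ↦ (hf x hx).continuousAt.continuousWithinAt)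
    (fun x hx ↦ (hf x (interior_subset hx)).hasDerivWithinAt) hf'

lemma exists_nonpos_of_deriv_le_neg {a r : ℝ} (hr : 0 < r)
    (hf : ∀ x ∈ Ici a, HasDerivAt f (f' x) x) (hf' : ∀ x ∈ Ici a, f' x ≤ -r) :
    ∃ x ∈ Ici a, f x ≤ 0 := by
  have hmono : MonotoneOn (fun x ↦ -f x - r * x) (Ici a) :=
    monotoneOn_of_hasDerivAt_nonneg (convex_Ici a)
      (fun x hx ↦ (hf x hx).neg.sub ((hasDerivAt_id x).const_mul r))
      (fun x hx ↦ by linarith [hf' x (interior_subset hx)])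
  have hx : a + |f a| / r ∈ Ici a := mem_Ici.mpr (le_add_of_nonneg_right (by positivity))
  refine ⟨_, hx, ?_⟩
  have hdecay : -f a - r * a ≤ -f (a + |f a| / r) - r * (a + |f a| / r) :=
    hmono self_mem_Ici hx (mem_Ici.mp hx)
  rw [mul_add, mul_div_cancel₀ _ hr.ne'] at hdecay
  linarith [le_abs_self (f a)]

end

lemma exists_lt_and_deriv_pos_of_le_of_lt {u u' : ℝ → ℝ} {a b m : ℝ} (hab : a ≤ b)
    (hu : ContinuousOn u (Icc a b)) (hu' : ∀ x ∈ Ioo a b, HasDerivAt u (u' x) x)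
    (ha : u a ≤ m) (hb : m < u b) : ∃ c ∈ Ioo a b, m < u c ∧ 0 < u' c := by
  have hS : IsCompact (Icc a b ∩ u ⁻¹' Iic m) :=
    isCompact_Icc.of_isClosed_subset (hu.preimage_isClosed_of_isClosed isClosed_Icc isClosed_Iic)
      inter_subset_left
  obtain ⟨x₀, ⟨⟨hax₀, hx₀b⟩, hx₀m⟩, hx₀max⟩ := hS.exists_isGreatest ⟨a, ⟨le_rfl, hab⟩, ha⟩
  have hx₀b' : x₀ < b := hx₀b.lt_of_ne (by rintro rfl; exact hb.not_ge hx₀m)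
  obtain ⟨c, ⟨hx₀c, hcb⟩, hslope⟩ := exists_hasDerivAt_eq_slope u u' hx₀b'
    (hu.mono (Icc_subset_Icc hax₀ le_rfl)) (fun x hx ↦ hu' x ⟨hax₀.trans_lt hx.1, hx.2⟩)
  have hcm : m < u c := by
    by_contra! hcm
    exact (hx₀max ⟨⟨hax₀.trans hx₀c.le, hcb.le⟩, hcm⟩).not_gt hx₀c
  refine ⟨c, ⟨hax₀.trans_lt hx₀c, hcb⟩, hcm, ?_⟩
  rw [hslope]
  exact div_pos (by linarith [show u x₀ ≤ m from hx₀m]) (by linarith)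

lemma false_of_mul_cube_le_sq_deriv {w w' : ℝ → ℝ} {b q : ℝ} (hq : 0 < q)
    (hw : ∀ x ∈ Ici b, HasDerivAt w (w' x) x) (hpos : ∀ x ∈ Ici b, 0 < w x)
    (hw' : ∀ x ∈ Ici b, 0 ≤ w' x) (hcube : ∀ x ∈ Ici b, q * w x ^ 3 ≤ w' x ^ 2) : False := by
  have hs : ∀ x ∈ Ici b, 0 < √(w x) := fun x hx ↦ Real.sqrt_pos.mpr (hpos x hx)
  have hderiv : ∀ x ∈ Ici b, -(w' x / (2 * √(w x))) / √(w x) ^ 2 ≤ -(√q / 2) := by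
    intro x hx
    have hsx := hs x hx
    have hle : √q * √(w x) ^ 3 ≤ w' x := by
      refine (pow_le_pow_iff_left₀ (by positivity) (hw' x hx) two_ne_zero).mp ?_
      calc (√q * √(w x) ^ 3) ^ 2 = q * (√(w x) ^ 2) ^ 3 := by rw [mul_pow, Real.sq_sqrt hq.le]; ring
        _ ≤ w' x ^ 2 := by rw [Real.sq_sqrt (hpos x hx).le]; exact hcube x hx
    have heq : -(w' x / (2 * √(w x))) / √(w x) ^ 2 = -(w' x / (2 * √(w x) ^ 3)) := by
      field_simp
    rw [heq, neg_le_neg_iff, le_div_iff₀ (by positivity)]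
    linarith
  obtain ⟨x, hx, hx'⟩ := exists_nonpos_of_deriv_le_neg (f := fun x ↦ (√(w x))⁻¹) (by positivity)
    (fun x hx ↦ ((hw x hx).sqrt (hpos x hx).ne').inv (hs x hx).ne') hderiv
  exact hx'.not_gt (inv_pos.mpr (hs x hx))

section
variable {v v' v'' : ℝ → ℝ} {a : ℝ}

lemma deriv_pos_of_deriv2_nonneg_of_le (hv : ∀ x ∈ Ici a, HasDerivAt v (v' x) x)
    (hv' : ∀ x ∈ Ici a, HasDerivAt v' (v'' x) x) (ha : 0 < v' a)
    (hv'' : ∀ x ∈ Ici a, v a ≤ v x → 0 ≤ v'' x) : ∀ x ∈ Ici a, 0 < v' x := by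
  intro x hx
  by_contra! hx'
  have hS : IsCompact (Icc a x ∩ v' ⁻¹' Iic 0) :=
    isCompact_Icc.of_isClosed_subset
      ((continuousOn_of_forall_continuousAt fun t ht ↦ (hv' t ht.1).continuousAt).preimage_isClosed_of_isClosed
        isClosed_Icc isClosed_Iic)
      inter_subset_left
  obtain ⟨z, ⟨⟨haz, hzx⟩, hz⟩, hzmin⟩ := hS.exists_isLeast ⟨x, ⟨hx, le_rfl⟩, hx'⟩
  have hpos : ∀ t ∈ Ico a z, 0 < v' t := fun t ht ↦ by
    by_contra! ht'
    exact (hzmin ⟨⟨ht.1, ht.2.le.trans hzx⟩, ht'⟩).not_gt ht.2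
  have hmono : MonotoneOn v (Icc a z) :=
    monotoneOn_of_hasDerivAt_nonneg (convex_Icc a z) (fun t ht ↦ hv t ht.1) fun t ht ↦ by
      rw [interior_Icc] at ht
      exact (hpos t (Ioo_subset_Ico_self ht)).le
  have hmono' : MonotoneOn v' (Icc a z) :=
    monotoneOn_of_hasDerivAt_nonneg (convex_Icc a z) (fun t ht ↦ hv' t ht.1) fun t ht ↦ by
      rw [interior_Icc] at ht
      exact hv'' t ht.1.le (hmono ⟨le_rfl, haz⟩ (Ioo_subset_Icc_self ht) ht.1.le)
  linarith [hmono' ⟨le_rfl, haz⟩ ⟨haz, le_rfl⟩ haz, show v' z ≤ 0 from hz]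

lemma false_of_sq_le_deriv2 {k : ℝ} (hk : 0 < k)
    (hv : ∀ x ∈ Ici a, HasDerivAt v (v' x) x) (hv' : ∀ x ∈ Ici a, HasDerivAt v' (v'' x) x)
    (ha : 0 < v' a) (hv'' : ∀ x ∈ Ici a, v a ≤ v x → k * (v x - v a) ^ 2 ≤ v'' x) : False := by
  have hv'pos := deriv_pos_of_deriv2_nonneg_of_le hv hv' ha fun x hx hvx ↦
    (mul_nonneg hk.le (sq_nonneg _)).trans (hv'' x hx hvx)
  have hmono : StrictMonoOn v (Ici a) := strictMonoOn_of_hasDerivAt_pos (convex_Ici a) hv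
    fun x hx ↦ hv'pos x (interior_subset hx)
  have hva : ∀ x ∈ Ici a, v a ≤ v x := fun x hx ↦ hmono.monotoneOn self_mem_Ici hx hx
  have henergy : MonotoneOn (fun x ↦ v' x ^ 2 - 2 * k / 3 * (v x - v a) ^ 3) (Ici a) :=
    monotoneOn_of_hasDerivAt_nonneg (convex_Ici a)
      (fun x hx ↦ ((hv' x hx).pow 2).sub ((((hv x hx).sub_const (v a)).pow 3).const_mul _))
      fun x hx ↦ by
        have hx := interior_subset hx
        norm_num
        nlinarith [mul_nonneg (hv'pos x hx).le (sub_nonneg.mpr (hv'' x hx (hva x hx)))]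
  have hsub : Ici (a + 1) ⊆ Ici a := Ici_subset_Ici.mpr (by linarith)
  refine false_of_mul_cube_le_sq_deriv (w := fun x ↦ v x - v a) (q := 2 * k / 3) (by positivity)
    (fun x hx ↦ (hv x (hsub hx)).sub_const (v a))
    (fun x hx ↦ sub_pos.mpr (hmono self_mem_Ici (hsub hx) (by linarith [mem_Ici.mp hx])))
    (fun x hx ↦ (hv'pos x (hsub hx)).le) fun x hx ↦ ?_
  have := henergy self_mem_Ici (hsub hx) (hsub hx)
  norm_num at this
  linarith [sq_nonneg (v' a)]

end

theorem stmt0_general (d lam : ℝ) (hd : 0 < d) (hlam : 0 < lam)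
    (f u u' u'' : ℝ → ℝ)
    (f₀ : ℝ) (hf₀ : 0 < f₀) (hf_lb : ∀ x ∈ Ici (0:ℝ), f₀ ≤ f x)
    (hf_bdd : BddAbove (f '' Ici 0))
    (hu_cont : ContinuousOn u (Ici 0))
    (hu0 : u 0 = 0)
    (hu' : ∀ x ∈ Ioi (0:ℝ), HasDerivAt u (u' x) x)
    (hu'' : ∀ x ∈ Ioi (0:ℝ), HasDerivAt u' (u'' x) x)
    (hode : ∀ x ∈ Ioi (0:ℝ), -(d * u'' x) = u x * (f x - lam * u x)) :
    ∀ x ∈ Ici (0:ℝ), u x ≤ sSup (f '' Ici 0) / lam := by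
  intro x₁ hx₁
  by_contra! hx₁m
  set M := sSup (f '' Ici 0)
  have hfM : ∀ x ∈ Ici (0:ℝ), f x ≤ M := fun x hx ↦ le_csSup hf_bdd (mem_image_of_mem f hx)
  have hm : 0 < M / lam :=
    div_pos (hf₀.trans_le ((hf_lb 0 self_mem_Ici).trans (hfM 0 self_mem_Ici))) hlam
  obtain ⟨c, ⟨hc, -⟩, hcm, hc'⟩ := exists_lt_and_deriv_pos_of_le_of_lt hx₁
    (hu_cont.mono Icc_subset_Ici_self) (fun x hx ↦ hu' x hx.1) (hu0.trans_le hm.le) hx₁m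
  refine false_of_sq_le_deriv2 (div_pos hlam hd) (fun x hx ↦ hu' x (hc.trans_le hx))
    (fun x hx ↦ hu'' x (hc.trans_le hx)) hc' fun x hx hux ↦ ?_
  have hx : 0 < x := hc.trans_le hx
  have huc : 0 < u c := hm.trans hcm
  have hux0 : 0 < u x := huc.trans_le hux
  have hMu : M < lam * u c := by rwa [div_lt_iff₀' hlam] at hcm
  rw [div_mul_eq_mul_div, div_le_iff₀' hd]
  calc lam * (u x - u c) ^ 2 ≤ lam * (u x * (u x - u c)) := by
        rw [sq]
        exact mul_le_mul_of_nonneg_left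
          (mul_le_mul_of_nonneg_right (sub_le_self _ huc.le) (sub_nonneg.mpr hux)) hlam.le
    _ ≤ u x * (lam * u x - M) := by nlinarith [mul_le_mul_of_nonneg_left hMu.le hux0.le]
    _ ≤ u x * (lam * u x - f x) :=
        mul_le_mul_of_nonneg_left (by linarith [hfM x hx.le]) hux0.le
    _ = d * u'' x := by linarith [hode x hx]

/-- any positive solution of `-d u'' = u (f - λ u)` on `(0,∞)` with
`u(0) = 0`, defined on all of `[0,∞)`, satisfies `sup_{x ≥ 0} u(x) ≤ (sup f)/λ`. -/
theorem stmt0 (d lam : ℝ) (hd : 0 < d) (hlam : 0 < lam)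
    (f u u' u'' : ℝ → ℝ)
    (hf_cont : ContinuousOn f (Ici 0))
    (f₀ : ℝ) (hf₀ : 0 < f₀) (hf_lb : ∀ x ∈ Ici (0:ℝ), f₀ ≤ f x)
    (hf_bdd : BddAbove (f '' Ici 0))
    (hu_cont : ContinuousOn u (Ici 0))
    (hu0 : u 0 = 0)
    (hu_pos : ∀ x ∈ Ioi (0:ℝ), 0 < u x)
    (hu' : ∀ x ∈ Ioi (0:ℝ), HasDerivAt u (u' x) x)
    (hu'' : ∀ x ∈ Ioi (0:ℝ), HasDerivAt u' (u'' x) x)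
    (hode : ∀ x ∈ Ioi (0:ℝ), -(d * u'' x) = u x * (f x - lam * u x)) :
    ∀ x ∈ Ici (0:ℝ), u x ≤ sSup (f '' Ici 0) / lam :=
  stmt0_general d lam hd hlam f u u' u'' f₀ hf₀ hf_lb hf_bdd hu_cont hu0 hu' hu'' hode
end

section
/- Let d > 0, λ > 0, and let f be continuous on [0,∞) with 0 < inf f ≤ sup f < ∞. If u₁, u₂ are positive solutions on (0,∞) of -d uᵢ'' = uᵢ(fᵢ(x) - λ uᵢ) with uᵢ(0) = 0, where f₁(x) ≤ f₂(x) for all x ≥ 0, inf_{x≥1} u₂ > 0, sup uᵢ < ∞, and uᵢ'(0) > 0, then u₁(x) ≤ u₂(x) for all x ≥ 0. -/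
/-!
Let `k` be the least factor with `u₁ ≤ k u₂` on `[0, ∞)`; factors exist because both solutions
vanish linearly at `0` with `u₂'(0) > 0`, and `u₂ ≥ τ` beyond `1`. Suppose `k > 1`. Since
`f₁ ≤ f₂`, the function `w = k u₂ - u₁ ≥ 0` satisfies `w'' ≤ (2λk/d) u₂ w - (λk(k-1)/d) u₂²`.
Hence `w'' < 0` wherever `w` vanishes, so `w > 0` on `(0, ∞)`; `w'' ≤ K w` gives `w'(0) > 0`
(Hopf's lemma); and where `u₂ ≥ τ`, `w` is uniformly concave while it is small, so it cannot dip
below some `δ > 0` on `[2, ∞)`. Together these give `u₂ ≤ C w`, i.e. `u₁ ≤ (k - 1/C) u₂`,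
contradicting the minimality of `k`.
-/

open Set Filter Topology

section

variable {u w w' w'' : ℝ → ℝ}

theorem le_tangent_add_of_deriv2_le {S : Set ℝ} (hS : Convex ℝ S)
    {C p x y : ℝ} (hw : ContinuousOn w S) (hw' : ∀ t ∈ interior S, HasDerivAt w (w' t) t)
    (hw'' : ∀ t ∈ interior S, HasDerivAt w' (w'' t) t) (hC : ∀ t ∈ interior S, w'' t ≤ C)
    (hx : x ∈ S) (hy : y ∈ S) (hp : HasDerivWithinAt w p S x) :
    w y ≤ w x + p * (y - x) + C * (y - x) ^ 2 / 2 := by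
  set g : ℝ → ℝ := fun t ↦ w t - C * (t - x) ^ 2 / 2
  have hq : ∀ t, HasDerivAt (fun t ↦ C * (t - x) ^ 2 / 2) (C * (t - x)) t := fun t ↦ by
    refine ((((hasDerivAt_id' t).sub_const x).fun_pow 2 |>.const_mul C).div_const 2).congr_deriv ?_
    push_cast; ring
  have hg : ConcaveOn ℝ S g := by
    refine concaveOn_of_hasDerivWithinAt2_nonpos hS (hw.sub (by fun_prop))
      (f' := fun t ↦ w' t - C * (t - x)) (f'' := fun t ↦ w'' t - C)
      (fun t ht ↦ ((hw' t ht).fun_sub (hq t)).hasDerivWithinAt) (fun t ht ↦ ?_)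
      (fun t ht ↦ sub_nonpos.2 (hC t ht))
    exact ((hw'' t ht).fun_sub (((hasDerivAt_id' t).sub_const x).const_mul C)).hasDerivWithinAt
      |>.congr_deriv (by ring)
  have hgx : HasDerivWithinAt g p S x := by
    simpa using hp.fun_sub (hq x).hasDerivWithinAt
  rcases lt_trichotomy x y with hxy | rfl | hxy
  · have := hg.slope_le_of_hasDerivWithinAt hx hy hxy hgx
    rw [slope_def_field, div_le_iff₀ (sub_pos.2 hxy)] at this
    simp only [g] at this
    linarith
  · simp
  · have := hg.le_slope_of_hasDerivWithinAt hy hx hxy hgx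
    rw [slope_def_field, le_div_iff₀ (sub_pos.2 hxy)] at this
    simp only [g] at this
    nlinarith

theorem not_isLocalMin_of_deriv2_neg {x : ℝ}
    (hw : ∀ᶠ y in 𝓝 x, HasDerivAt w (w' y) y) (hw' : HasDerivAt w' (w'' x) x)
    (hneg : w'' x < 0) : ¬IsLocalMin w x := by
  intro hmin
  have hw'x : w' x = 0 := hmin.hasDerivAt_eq_zero hw.self_of_nhds
  have hw'_neg : ∀ᶠ y in 𝓝[>] x, w' y < 0 := by
    have hslope := (hasDerivAt_iff_tendsto_slope.1 hw').mono_left (nhdsGT_le_nhdsNE x)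
    filter_upwards [hslope.eventually (gt_mem_nhds hneg), self_mem_nhdsWithin]
      with y hy (hxy : x < y)
    rwa [slope_def_field, hw'x, sub_zero, div_lt_iff₀ (sub_pos.2 hxy), zero_mul] at hy
  obtain ⟨u, hxu, hu⟩ := mem_nhdsGT_iff_exists_Ioo_subset.1 <| hw'_neg.and <|
    (hw.filter_mono nhdsWithin_le_nhds).and (hmin.filter_mono nhdsWithin_le_nhds)
  obtain ⟨y, hxy, hyu⟩ := exists_between (mem_Ioi.1 hxu)
  have hIoc : Ioc x y ⊆ Ioo x u := fun t ht ↦ ⟨ht.1, ht.2.trans_lt hyu⟩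
  have hcont : ContinuousOn w (Icc x y) := fun t ht ↦ by
    rcases ht.1.eq_or_lt with rfl | hxt
    · exact hw.self_of_nhds.continuousAt.continuousWithinAt
    · exact (hu (hIoc ⟨hxt, ht.2⟩)).2.1.continuousAt.continuousWithinAt
  obtain ⟨c, hc, hslope⟩ := exists_hasDerivAt_eq_slope w w' hxy hcont
    fun t ht ↦ (hu (hIoc (Ioo_subset_Ioc_self ht))).2.1
  have hcneg := (hu (hIoc (Ioo_subset_Ioc_self hc))).1
  have hwy : w x ≤ w y := (hu (hIoc ⟨hxy, le_rfl⟩)).2.2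
  rw [hslope, div_lt_iff₀ (sub_pos.2 hxy), zero_mul] at hcneg
  linarith

theorem le_of_deriv_nonpos_of_deriv2_le_neg {a b c δ : ℝ} (hab : a ≤ b)
    (hc : 0 ≤ c) (hw' : ∀ t ∈ Icc a b, HasDerivAt w (w' t) t)
    (hw'' : ∀ t ∈ Ioo a b, HasDerivAt w' (w'' t) t)
    (hconc : ∀ t ∈ Ioo a b, w t < δ → w'' t ≤ -c)
    (hb : 0 ≤ w b) (ha : w' a ≤ 0) (hδ : δ ≤ c * (b - a) ^ 2 / 2) : δ ≤ w a := by
  by_contra! hwa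
  have hw : ContinuousOn w (Icc a b) := fun t ht ↦ (hw' t ht).continuousAt.continuousWithinAt
  -- `s` is the first point of `[a, b]` where `w` reaches `δ`, or `b` if there is none
  set F := {t ∈ Icc a b | δ ≤ w t} ∪ {b}
  have hF : IsClosed F :=
    (hw.preimage_isClosed_of_isClosed isClosed_Icc isClosed_Ici).union isClosed_singleton
  have hbdd : BddBelow F := ⟨a, by rintro t (ht | rfl); exacts [ht.1.1, hab]⟩
  set s := sInf F
  have hsF : s ∈ F := hF.csInf_mem ⟨b, Or.inr rfl⟩ hbdd
  have hsb : s ≤ b := csInf_le hbdd (Or.inr rfl)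
  have has : a ≤ s := le_csInf ⟨b, Or.inr rfl⟩ (by rintro t (ht | rfl); exacts [ht.1.1, hab])
  have hbelow : ∀ t ∈ Ioo a s, w t < δ := fun t ht ↦ by
    by_contra! h
    exact (csInf_le hbdd (Or.inl ⟨⟨ht.1.le, ht.2.le.trans hsb⟩, h⟩)).not_gt ht.2
  have hsub : Ioo a s ⊆ Ioo a b := Ioo_subset_Ioo_right hsb
  have htangent := le_tangent_add_of_deriv2_le (convex_Icc a s) (C := -c)
    (hw.mono (Icc_subset_Icc_right hsb))
    (by simpa using fun t ht ↦ hw' t (Ioo_subset_Icc_self (hsub ht)))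
    (by simpa using fun t ht ↦ hw'' t (hsub ht))
    (by simpa using fun t ht ↦ hconc t (hsub ht) (hbelow t ht))
    (left_mem_Icc.2 has) (right_mem_Icc.2 has) (hw' a ⟨le_rfl, hab⟩).hasDerivWithinAt
  have hslope : w' a * (s - a) ≤ 0 := mul_nonpos_of_nonpos_of_nonneg ha (sub_nonneg.2 has)
  rcases hsF with ⟨-, hδs⟩ | hsb
  · nlinarith [sq_nonneg (s - a)]
  · rw [mem_singleton_iff.1 hsb] at htangent hslope
    linarith

theorem le_of_deriv2_le_neg {x r c δ : ℝ} (hr : 0 ≤ r) (hc : 0 ≤ c)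
    (hw' : ∀ t ∈ Icc (x - r) (x + r), HasDerivAt w (w' t) t)
    (hw'' : ∀ t ∈ Icc (x - r) (x + r), HasDerivAt w' (w'' t) t)
    (hpos : ∀ t ∈ Icc (x - r) (x + r), 0 ≤ w t)
    (hconc : ∀ t ∈ Icc (x - r) (x + r), w t < δ → w'' t ≤ -c)
    (hδ : δ ≤ c * r ^ 2 / 2) : δ ≤ w x := by
  have hright : Icc x (x + r) ⊆ Icc (x - r) (x + r) := Icc_subset_Icc_left (by linarith)
  have hleft : ∀ t ∈ Icc (-x) (-x + r), -t ∈ Icc (x - r) (x + r) := fun t ht ↦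
    ⟨by linarith [ht.2], by linarith [ht.1]⟩
  rcases le_total (w' x) 0 with hx | hx
  · refine le_of_deriv_nonpos_of_deriv2_le_neg (by linarith) hc (fun t ht ↦ hw' t (hright ht))
      (fun t ht ↦ hw'' t (hright (Ioo_subset_Icc_self ht)))
      (fun t ht ↦ hconc t (hright (Ioo_subset_Icc_self ht))) (hpos _ ⟨by linarith, le_rfl⟩) hx
      (by simpa using hδ)
  · have h := le_of_deriv_nonpos_of_deriv2_le_neg (w := fun t ↦ w (-t))
      (w' := fun t ↦ -w' (-t)) (w'' := fun t ↦ w'' (-t)) (a := -x) (b := -x + r) (by linarith) hc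
      (fun t ht ↦ ((hw' (-t) (hleft t ht)).comp t (hasDerivAt_neg t)).congr_deriv (by ring))
      (fun t ht ↦ ((hw'' (-t) (hleft t (Ioo_subset_Icc_self ht))).comp t
        (hasDerivAt_neg t)).neg.congr_deriv (by ring))
      (fun t ht ↦ hconc (-t) (hleft t (Ioo_subset_Icc_self ht)))
      (hpos _ (hleft _ ⟨by linarith, le_rfl⟩)) (by simpa using hx) (by simpa using hδ)
    simpa using h

theorem exists_pos_le_of_deriv2_le_neg_add {a A K : ℝ} (hA : 0 < A)
    (hK : 0 ≤ K) (hw' : ∀ t ∈ Ici a, HasDerivAt w (w' t) t)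
    (hw'' : ∀ t ∈ Ici a, HasDerivAt w' (w'' t) t) (hpos : ∀ t ∈ Ici a, 0 ≤ w t)
    (hineq : ∀ t ∈ Ici a, w'' t ≤ -A + K * w t) : ∃ δ > 0, ∀ x ∈ Ici (a + 1), δ ≤ w x := by
  -- this `δ` gives `w'' ≤ -A / 2` on `{w < δ}` and `δ ≤ (A / 2) * 1 ^ 2 / 2`
  refine ⟨A / (4 + 2 * K), by positivity, fun x hx ↦ ?_⟩
  have hsub : Icc (x - 1) (x + 1) ⊆ Ici a := fun t ht ↦ by
    simp only [mem_Ici] at hx ⊢; linarith [ht.1]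
  refine le_of_deriv2_le_neg zero_le_one (c := A / 2) (by positivity)
    (fun t ht ↦ hw' t (hsub ht)) (fun t ht ↦ hw'' t (hsub ht)) (fun t ht ↦ hpos t (hsub ht))
    (fun t ht hwt ↦ ?_) ?_
  · have hKδ : K * w t ≤ A / 2 := by
      calc K * w t ≤ K * (A / (4 + 2 * K)) := mul_le_mul_of_nonneg_left hwt.le hK
        _ ≤ A / 2 := by
          rw [mul_div_assoc', div_le_div_iff₀ (by positivity) two_pos]; nlinarith
    linarith [hineq t (hsub ht)]
  · rw [div_le_iff₀ (by positivity)]; nlinarith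

theorem pos_of_hasDerivWithinAt_of_deriv2_le_mul {K p : ℝ} (hK : 0 ≤ K)
    (hw : ContinuousOn w (Ici 0)) (hw' : ∀ x ∈ Ioi 0, HasDerivAt w (w' x) x)
    (hw'' : ∀ x ∈ Ioi 0, HasDerivAt w' (w'' x) x) (hw0 : w 0 = 0)
    (hpos : ∀ x ∈ Ioi 0, 0 < w x) (hineq : ∀ x ∈ Ioi 0, w'' x ≤ K * w x)
    (hp : HasDerivWithinAt w p (Ici 0) 0) : 0 < p := by
  by_contra! hp0
  -- on `[0, a]` with `K a ≤ 1`, the tangent bound `w ≤ K M t² / 2` forces the maximum `M` to be `0`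
  set a := (K + 1)⁻¹
  have ha : 0 < a := by positivity
  have hKa : K * a ≤ 1 := by
    rw [← div_eq_mul_inv, div_le_one (by positivity)]; linarith
  have ha1 : a ≤ 1 := inv_le_one_of_one_le₀ (by linarith)
  obtain ⟨z, hz, hmax⟩ := isCompact_Icc.exists_isMaxOn (nonempty_Icc.2 ha.le)
    (hw.mono Icc_subset_Ici_self)
  have hwa : w a ≤ w z := hmax (right_mem_Icc.2 ha.le)
  have hwa_pos := hpos a ha
  have hinterior : interior (Icc 0 a) ⊆ Ioi 0 := interior_Icc.trans_subset Ioo_subset_Ioi_self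
  have htangent := le_tangent_add_of_deriv2_le (convex_Icc 0 a) (C := K * w z)
    (hw.mono Icc_subset_Ici_self) (fun t ht ↦ hw' t (hinterior ht))
    (fun t ht ↦ hw'' t (hinterior ht))
    (fun t ht ↦ (hineq t (hinterior ht)).trans
      (mul_le_mul_of_nonneg_left (hmax (interior_subset ht)) hK))
    (left_mem_Icc.2 ha.le) hz (hp.mono Icc_subset_Ici_self)
  rw [hw0, sub_zero] at htangent
  have hKz : K * z ≤ 1 := (mul_le_mul_of_nonneg_left hz.2 hK).trans hKa
  have hquad : K * w z * z ^ 2 ≤ w z :=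
    calc K * w z * z ^ 2 = (K * z) * z * w z := by ring
      _ ≤ 1 * 1 * w z := by
        gcongr
        exacts [hwa_pos.le.trans hwa, hz.1, hz.2.trans ha1]
      _ = w z := by ring
  linarith [mul_nonpos_of_nonpos_of_nonneg hp0 hz.1]

theorem exists_pos_forall_Ici_le {a R δ : ℝ} (hw : ContinuousOn w (Ici a))
    (hpos : ∀ x ∈ Ici a, 0 < w x) (hδ : 0 < δ) (hfar : ∀ x ∈ Ici R, δ ≤ w x) :
    ∃ m > 0, ∀ x ∈ Ici a, m ≤ w x := by
  obtain ⟨z, hz, hmin⟩ := isCompact_Icc.exists_isMinOn (nonempty_Icc.2 (le_max_left a R))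
    (hw.mono Icc_subset_Ici_self)
  refine ⟨min (w z) δ, lt_min (hpos z hz.1) hδ, fun x hx ↦ ?_⟩
  rcases le_total x (max a R) with hxR | hRx
  · exact (min_le_left _ _).trans (hmin ⟨hx, hxR⟩)
  · exact (min_le_right _ _).trans (hfar x ((le_max_right a R).trans hRx))

theorem tendsto_div_of_hasDerivWithinAt_Ici {p : ℝ}
    (hp : HasDerivWithinAt u p (Ici 0) 0) (hu0 : u 0 = 0) :
    Tendsto (fun x ↦ u x / x) (𝓝[>] 0) (𝓝 p) := by
  have h := hasDerivWithinAt_iff_tendsto_slope.1 hp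
  rw [Ici_sdiff_left] at h
  refine h.congr fun x ↦ ?_
  simp [slope_def_field, hu0]

theorem exists_le_mul_of_hasDerivWithinAt_pos {p q B δ R : ℝ}
    (hu : ∀ x ∈ Ici 0, u x ≤ B) (hu0 : u 0 = 0) (hp : HasDerivWithinAt u p (Ici 0) 0)
    (hw : ContinuousOn w (Ici 0)) (hw0 : w 0 = 0) (hpos : ∀ x ∈ Ioi 0, 0 < w x)
    (hq : HasDerivWithinAt w q (Ici 0) 0) (hq0 : 0 < q) (hδ : 0 < δ)
    (hfar : ∀ x ∈ Ici R, δ ≤ w x) : ∃ C > 0, ∀ x ∈ Ici 0, u x ≤ C * w x := by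
  set C₀ := (|p| + 1) / q
  have hnear : ∀ᶠ x in 𝓝[>] 0, u x / x < C₀ * (w x / x) :=
    (tendsto_div_of_hasDerivWithinAt_Ici hp hu0).eventually_lt
      ((tendsto_div_of_hasDerivWithinAt_Ici hq hw0).const_mul C₀)
      (by rw [div_mul_cancel₀ _ hq0.ne']; linarith [le_abs_self p])
  obtain ⟨η, hη, hη_near⟩ := mem_nhdsGT_iff_exists_Ioo_subset.1 hnear
  obtain ⟨m, hm, hm_far⟩ := exists_pos_forall_Ici_le (hw.mono (Ici_subset_Ici.2 (le_of_lt hη)))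
    (fun x hx ↦ hpos x (mem_Ioi.2 (lt_of_lt_of_le hη hx))) hδ hfar
  refine ⟨max C₀ (|B| / m), lt_max_of_lt_left (by positivity), fun x hx ↦ ?_⟩
  rcases (mem_Ici.1 hx).eq_or_lt with rfl | hx0
  · simp [hu0, hw0]
  rcases lt_or_ge x η with hxη | hηx
  · have h : u x / x < C₀ * (w x / x) := hη_near ⟨hx0, hxη⟩
    rw [← mul_div_assoc, div_lt_div_iff_of_pos_right hx0] at h
    exact h.le.trans (mul_le_mul_of_nonneg_right (le_max_left _ _) (hpos x hx0).le)
  · calc u x ≤ |B| := (hu x hx).trans (le_abs_self B)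
      _ = |B| / m * m := by field_simp
      _ ≤ max C₀ (|B| / m) * w x :=
        mul_le_mul (le_max_right _ _) (hm_far x hηx) hm.le (by positivity)

theorem mem_of_isClosed_of_isUpperSet {S : Set ℝ} {a : ℝ} (hS : IsClosed S)
    (hup : IsUpperSet S) (hne : S.Nonempty) (hlt : ∀ b ∈ S, a < b → ∃ b' ∈ S, b' < b) :
    a ∈ S := by
  by_contra ha
  have hgt : ∀ b ∈ S, a < b := fun b hb ↦ lt_of_not_ge fun hba ↦ ha (hup hba hb)
  have hbdd : BddBelow S := ⟨a, fun b hb ↦ (hgt b hb).le⟩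
  have hinf := hS.csInf_mem hne hbdd
  obtain ⟨b', hb', hlt'⟩ := hlt _ hinf (hgt _ hinf)
  exact (csInf_le hbdd hb').not_gt hlt'

theorem exists_le_mul_of_deriv2_le {p q α β B τ : ℝ} (hα : 0 < α)
    (hβ : 0 ≤ β) (hu0 : u 0 = 0) (hupos : ∀ x ∈ Ioi 0, 0 < u x) (hτ : 0 < τ)
    (huτ : ∀ x ∈ Ici 1, τ ≤ u x) (huB : ∀ x ∈ Ici 0, u x ≤ B)
    (hp : HasDerivWithinAt u p (Ici 0) 0) (hw : ContinuousOn w (Ici 0))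
    (hw' : ∀ x ∈ Ioi 0, HasDerivAt w (w' x) x) (hw'' : ∀ x ∈ Ioi 0, HasDerivAt w' (w'' x) x)
    (hw0 : w 0 = 0) (hwnonneg : ∀ x ∈ Ici 0, 0 ≤ w x) (hq : HasDerivWithinAt w q (Ici 0) 0)
    (hineq : ∀ x ∈ Ioi 0, w'' x ≤ β * u x * w x - α * u x ^ 2) :
    ∃ C > 0, ∀ x ∈ Ici 0, u x ≤ C * w x := by
  have hB : 0 ≤ B := hu0 ▸ huB 0 self_mem_Ici
  have hβuw : ∀ x ∈ Ioi 0, β * u x * w x ≤ β * B * w x := fun x hx ↦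
    mul_le_mul_of_nonneg_right (mul_le_mul_of_nonneg_left (huB x (Ioi_subset_Ici_self hx)) hβ)
      (hwnonneg x (Ioi_subset_Ici_self hx))
  have hwpos : ∀ x ∈ Ioi 0, 0 < w x := fun x hx ↦ by
    refine (hwnonneg x (Ioi_subset_Ici_self hx)).lt_of_ne' fun hwx ↦ ?_
    have hmin : IsLocalMin w x := by
      filter_upwards [Ioi_mem_nhds hx] with y hy
      exact hwx ▸ hwnonneg y (Ioi_subset_Ici_self hy)
    refine not_isLocalMin_of_deriv2_neg (eventually_of_mem (Ioi_mem_nhds hx) hw') (hw'' x hx)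
      ?_ hmin
    have h := hineq x hx
    rw [hwx, mul_zero, zero_sub] at h
    exact h.trans_lt (neg_neg_of_pos (mul_pos hα (pow_pos (hupos x hx) 2)))
  have hineq_near : ∀ x ∈ Ioi 0, w'' x ≤ β * B * w x := fun x hx ↦ by
    linarith [hineq x hx, hβuw x hx, mul_nonneg hα.le (sq_nonneg (u x))]
  have hq0 : 0 < q := pos_of_hasDerivWithinAt_of_deriv2_le_mul (mul_nonneg hβ hB) hw hw' hw''
    hw0 hwpos hineq_near hq
  have hIci : Ici (1 : ℝ) ⊆ Ioi 0 := Ici_subset_Ioi.2 zero_lt_one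
  have hineq_far : ∀ x ∈ Ici 1, w'' x ≤ -(α * τ ^ 2) + β * B * w x := fun x hx ↦ by
    have hτu : α * τ ^ 2 ≤ α * u x ^ 2 :=
      mul_le_mul_of_nonneg_left (pow_le_pow_left₀ hτ.le (huτ x hx) 2) hα.le
    linarith [hineq x (hIci hx), hβuw x (hIci hx)]
  obtain ⟨δ, hδ, hfar⟩ := exists_pos_le_of_deriv2_le_neg_add (mul_pos hα (pow_pos hτ 2))
    (mul_nonneg hβ hB) (fun x hx ↦ hw' x (hIci hx)) (fun x hx ↦ hw'' x (hIci hx))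
    (fun x hx ↦ hwnonneg x (Ioi_subset_Ici_self (hIci hx))) hineq_far
  exact exists_le_mul_of_hasDerivWithinAt_pos huB hu0 hp hw hw0 hwpos hq hq0 hδ hfar

end

structure IsHalfLineSolution (d lam : ℝ) (f u u' u'' : ℝ → ℝ) : Prop where
  continuousOn : ContinuousOn u (Ici 0)
  apply_zero : u 0 = 0
  hasDerivAt : ∀ x ∈ Ioi (0 : ℝ), HasDerivAt u (u' x) x
  hasDerivAt' : ∀ x ∈ Ioi (0 : ℝ), HasDerivAt u' (u'' x) x
  ode : ∀ x ∈ Ioi (0 : ℝ), -(d * u'' x) = u x * (f x - lam * u x)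

theorem logistic_deriv2_sub_le {d lam k f₁ f₂ a b a'' b'' : ℝ} (hlam : 0 ≤ lam) (hk : 0 ≤ k)
    (hf₁ : 0 ≤ f₁) (hff : f₁ ≤ f₂) (hb : 0 ≤ b) (hab : a ≤ k * b)
    (ha'' : -(d * a'') = a * (f₁ - lam * a)) (hb'' : -(d * b'') = b * (f₂ - lam * b)) :
    d * (k * b'' - a'') ≤ 2 * lam * k * b * (k * b - a) - lam * k * (k - 1) * b ^ 2 := by
  have hw : 0 ≤ k * b - a := sub_nonneg.2 hab
  have key : d * (k * b'' - a'') = 2 * lam * k * b * (k * b - a) - lam * k * (k - 1) * b ^ 2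
      - k * b * (f₂ - f₁) - (k * b - a) * f₁ - lam * (k * b - a) ^ 2 := by
    linear_combination ha'' - k * hb''
  rw [key]
  nlinarith [mul_nonneg (mul_nonneg hk hb) (sub_nonneg.2 hff), mul_nonneg hw hf₁,
    mul_nonneg hlam (sq_nonneg (k * b - a))]

theorem exists_lt_forall_le_mul {d lam k p₁ p₂ τ B : ℝ}
    {f₁ f₂ u₁ u₂ u₁' u₂' u₁'' u₂'' : ℝ → ℝ} (hd : 0 < d) (hlam : 0 < lam)
    (h₁ : IsHalfLineSolution d lam f₁ u₁ u₁' u₁'') (h₂ : IsHalfLineSolution d lam f₂ u₂ u₂' u₂'')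
    (hf₁ : ∀ x ∈ Ioi (0 : ℝ), 0 ≤ f₁ x) (hff : ∀ x ∈ Ioi (0 : ℝ), f₁ x ≤ f₂ x)
    (hu₂pos : ∀ x ∈ Ioi (0 : ℝ), 0 < u₂ x) (hτ : 0 < τ) (hu₂τ : ∀ x ∈ Ici (1 : ℝ), τ ≤ u₂ x)
    (hu₂B : ∀ x ∈ Ici (0 : ℝ), u₂ x ≤ B) (hder₁ : HasDerivWithinAt u₁ p₁ (Ici 0) 0)
    (hder₂ : HasDerivWithinAt u₂ p₂ (Ici 0) 0) (hk : 1 < k)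
    (hle : ∀ x ∈ Ici (0 : ℝ), u₁ x ≤ k * u₂ x) :
    ∃ k' < k, ∀ x ∈ Ici (0 : ℝ), u₁ x ≤ k' * u₂ x := by
  have hineq : ∀ x ∈ Ioi (0 : ℝ), k * u₂'' x - u₁'' x ≤
      2 * lam * k / d * u₂ x * (k * u₂ x - u₁ x) - lam * k * (k - 1) / d * u₂ x ^ 2 := by
    intro x hx
    have h := logistic_deriv2_sub_le hlam.le (by linarith) (hf₁ x hx) (hff x hx)
      (hu₂pos x hx).le (hle x (Ioi_subset_Ici_self hx)) (h₁.ode x hx) (h₂.ode x hx)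
    calc k * u₂'' x - u₁'' x = d * (k * u₂'' x - u₁'' x) / d := by field_simp
      _ ≤ (2 * lam * k * u₂ x * (k * u₂ x - u₁ x) - lam * k * (k - 1) * u₂ x ^ 2) / d := by
        gcongr
      _ = _ := by ring
  obtain ⟨C, hC, hCw⟩ := exists_le_mul_of_deriv2_le (w' := fun x ↦ k * u₂' x - u₁' x)
    (div_pos (mul_pos (mul_pos hlam (by linarith)) (by linarith)) hd) (by positivity)
    h₂.apply_zero hu₂pos hτ hu₂τ hu₂B hder₂
    ((continuousOn_const.mul h₂.continuousOn).sub h₁.continuousOn)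
    (fun x hx ↦ ((h₂.hasDerivAt x hx).const_mul k).sub (h₁.hasDerivAt x hx))
    (fun x hx ↦ ((h₂.hasDerivAt' x hx).const_mul k).sub (h₁.hasDerivAt' x hx))
    (by simp [h₁.apply_zero, h₂.apply_zero]) (fun x hx ↦ sub_nonneg.2 (hle x hx))
    ((hder₂.const_mul k).sub hder₁) hineq
  refine ⟨k - C⁻¹, sub_lt_self k (inv_pos.2 hC), fun x hx ↦ ?_⟩
  have h : C⁻¹ * u₂ x ≤ k * u₂ x - u₁ x := (inv_mul_le_iff₀ hC).2 (hCw x hx)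
  linarith [sub_mul k C⁻¹ (u₂ x)]

theorem stmt1_general (d lam : ℝ) (hd : 0 < d) (hlam : 0 < lam)
    (f₁ f₂ u₁ u₂ u₁' u₂' u₁'' u₂'' : ℝ → ℝ) (p₁ p₂ : ℝ)
    (m₁ M₁ : ℝ) (hm₁ : 0 < m₁)
    (hf₁ : ∀ x ∈ Ici (0:ℝ), m₁ ≤ f₁ x ∧ f₁ x ≤ M₁)
    (hff : ∀ x ∈ Ici (0:ℝ), f₁ x ≤ f₂ x)
    (hu₁c : ContinuousOn u₁ (Ici 0)) (hu₂c : ContinuousOn u₂ (Ici 0))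
    (hu₁0 : u₁ 0 = 0) (hu₂0 : u₂ 0 = 0)
    (hu₂pos : ∀ x ∈ Ioi (0:ℝ), 0 < u₂ x)
    (hu₁' : ∀ x ∈ Ioi (0:ℝ), HasDerivAt u₁ (u₁' x) x)
    (hu₂' : ∀ x ∈ Ioi (0:ℝ), HasDerivAt u₂ (u₂' x) x)
    (hu₁'' : ∀ x ∈ Ioi (0:ℝ), HasDerivAt u₁' (u₁'' x) x)
    (hu₂'' : ∀ x ∈ Ioi (0:ℝ), HasDerivAt u₂' (u₂'' x) x)
    (hode₁ : ∀ x ∈ Ioi (0:ℝ), -(d * u₁'' x) = u₁ x * (f₁ x - lam * u₁ x))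
    (hode₂ : ∀ x ∈ Ioi (0:ℝ), -(d * u₂'' x) = u₂ x * (f₂ x - lam * u₂ x))
    (hder₁ : HasDerivWithinAt u₁ p₁ (Ici 0) 0)
    (hder₂ : HasDerivWithinAt u₂ p₂ (Ici 0) 0) (hp₂ : 0 < p₂)
    (τ : ℝ) (hτ : 0 < τ) (hu₂lb : ∀ x ∈ Ici (1:ℝ), τ ≤ u₂ x)
    (B₁ B₂ : ℝ) (hu₁ub : ∀ x ∈ Ici (0:ℝ), u₁ x ≤ B₁)
    (hu₂ub : ∀ x ∈ Ici (0:ℝ), u₂ x ≤ B₂) :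
    ∀ x ∈ Ici (0:ℝ), u₁ x ≤ u₂ x := by
  have hu₂nonneg : ∀ x ∈ Ici (0 : ℝ), 0 ≤ u₂ x := fun x hx ↦
    (mem_Ici.1 hx).eq_or_lt.elim (fun h ↦ h ▸ hu₂0.ge) fun h ↦ (hu₂pos x h).le
  suffices h : (1 : ℝ) ∈ {k : ℝ | ∀ x ∈ Ici (0 : ℝ), u₁ x ≤ k * u₂ x} by simpa using h
  refine mem_of_isClosed_of_isUpperSet ?_ ?_ ?_ fun k hk hk1 ↦ ?_
  · simp only [ofPred_forall]
    exact isClosed_biInter fun x _ ↦ isClosed_le continuous_const (by fun_prop)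
  · exact fun k k' hkk' hk x hx ↦
      (hk x hx).trans (mul_le_mul_of_nonneg_right hkk' (hu₂nonneg x hx))
  · obtain ⟨C, -, hC⟩ := exists_le_mul_of_hasDerivWithinAt_pos hu₁ub hu₁0 hder₁ hu₂c hu₂0
      hu₂pos hder₂ hp₂ hτ hu₂lb
    exact ⟨C, hC⟩
  · obtain ⟨k', hk'k, hk'⟩ := exists_lt_forall_le_mul hd hlam ⟨hu₁c, hu₁0, hu₁', hu₁'', hode₁⟩
      ⟨hu₂c, hu₂0, hu₂', hu₂'', hode₂⟩ (fun x hx ↦ hm₁.le.trans (hf₁ x (Ioi_subset_Ici_self hx)).1)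
      (fun x hx ↦ hff x (Ioi_subset_Ici_self hx)) hu₂pos hτ hu₂lb hu₂ub hder₁ hder₂ hk1 hk
    exact ⟨k', hk', hk'k⟩

/-- comparison principle for the half-line logistic-type problem. -/
theorem stmt1 (d lam : ℝ) (hd : 0 < d) (hlam : 0 < lam)
    (f₁ f₂ u₁ u₂ u₁' u₂' u₁'' u₂'' : ℝ → ℝ) (p₁ p₂ : ℝ)
    (hf₁c : ContinuousOn f₁ (Ici 0)) (hf₂c : ContinuousOn f₂ (Ici 0))
    (m₁ m₂ M₁ M₂ : ℝ) (hm₁ : 0 < m₁) (hm₂ : 0 < m₂)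
    (hf₁ : ∀ x ∈ Ici (0:ℝ), m₁ ≤ f₁ x ∧ f₁ x ≤ M₁)
    (hf₂ : ∀ x ∈ Ici (0:ℝ), m₂ ≤ f₂ x ∧ f₂ x ≤ M₂)
    (hff : ∀ x ∈ Ici (0:ℝ), f₁ x ≤ f₂ x)
    (hu₁c : ContinuousOn u₁ (Ici 0)) (hu₂c : ContinuousOn u₂ (Ici 0))
    (hu₁0 : u₁ 0 = 0) (hu₂0 : u₂ 0 = 0)
    (hu₁pos : ∀ x ∈ Ioi (0:ℝ), 0 < u₁ x) (hu₂pos : ∀ x ∈ Ioi (0:ℝ), 0 < u₂ x)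
    (hu₁' : ∀ x ∈ Ioi (0:ℝ), HasDerivAt u₁ (u₁' x) x)
    (hu₂' : ∀ x ∈ Ioi (0:ℝ), HasDerivAt u₂ (u₂' x) x)
    (hu₁'' : ∀ x ∈ Ioi (0:ℝ), HasDerivAt u₁' (u₁'' x) x)
    (hu₂'' : ∀ x ∈ Ioi (0:ℝ), HasDerivAt u₂' (u₂'' x) x)
    (hode₁ : ∀ x ∈ Ioi (0:ℝ), -(d * u₁'' x) = u₁ x * (f₁ x - lam * u₁ x))
    (hode₂ : ∀ x ∈ Ioi (0:ℝ), -(d * u₂'' x) = u₂ x * (f₂ x - lam * u₂ x))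
    (hder₁ : HasDerivWithinAt u₁ p₁ (Ici 0) 0) (hp₁ : 0 < p₁)
    (hder₂ : HasDerivWithinAt u₂ p₂ (Ici 0) 0) (hp₂ : 0 < p₂)
    (τ : ℝ) (hτ : 0 < τ) (hu₂lb : ∀ x ∈ Ici (1:ℝ), τ ≤ u₂ x)
    (B₁ B₂ : ℝ) (hu₁ub : ∀ x ∈ Ici (0:ℝ), u₁ x ≤ B₁)
    (hu₂ub : ∀ x ∈ Ici (0:ℝ), u₂ x ≤ B₂) :
    ∀ x ∈ Ici (0:ℝ), u₁ x ≤ u₂ x :=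
  stmt1_general d lam hd hlam f₁ f₂ u₁ u₂ u₁' u₂' u₁'' u₂'' p₁ p₂ m₁ M₁ hm₁ hf₁ hff hu₁c hu₂c hu₁0
    hu₂0 hu₂pos hu₁' hu₂' hu₁'' hu₂'' hode₁ hode₂ hder₁ hder₂ hp₂ τ hτ hu₂lb B₁ B₂ hu₁ub hu₂ub
end

section
/- Let d, λ > 0 and f : [0,∞) → ℝ satisfy the hypotheses of the existence theorem (continuous, bounded, inf f > 0). If u is the unique positive solution of -d u'' = u(f(x) - λ u) on (0,∞) with u(0) = 0 and f is nondecreasing with limit L at infinity, then u is nondecreasing and lim_{x→∞} u(x) = L/λ. -/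
/-!
Monotonicity: if `u` decreased somewhere, take a maximum point `p` of `u` on `[0, y]` with
`u y < u p`. At an interior maximum the equation gives `λ u ≤ f`, at an interior minimum
`f ≤ λ u`; since `f` is nondecreasing, no local minimum after `p` lies below `u p`. Hence `u`
keeps below `u p` after `y`, so `f - λ u > 0` there and `u` is strictly concave on `[y, ∞)`.
A strictly concave function that stays positive is strictly increasing, which contradicts `u`
attaining on `[p, T]` its minimum at `T` for every `T ≥ y`.

Limit: `u` is monotone and bounded, so it has a limit `l ≥ u 1 > 0`, and then `u''` tends to
`l (λ l - L) / d`. A nonzero limit of `u''` would drive `u` to `±∞`, so `λ l = L`.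
-/

open Set Filter Topology

theorem IsLocalMax.hasDerivAt_deriv_nonpos {u u' : ℝ → ℝ} {x c : ℝ} (hmax : IsLocalMax u x)
    (hu' : ∀ᶠ t in 𝓝 x, HasDerivAt u (u' t) t) (hu'' : HasDerivAt u' c x) : c ≤ 0 := by
  have hzero : u' x = 0 := hmax.hasDerivAt_eq_zero hu'.self_of_nhds
  by_contra! hc
  have hslope : ∀ᶠ t in 𝓝[>] x, 0 < slope u' x t :=
    (hasDerivAt_iff_tendsto_slope.mp hu'').eventually (eventually_gt_nhds hc)
      |>.filter_mono (nhdsWithin_mono x fun t ht => ne_of_gt ht)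
  obtain ⟨b, hxb, hb⟩ := mem_nhdsGT_iff_exists_Ioc_subset.mp
    (((hu'.and hmax).filter_mono nhdsWithin_le_nhds).and hslope)
  have hcont : ContinuousOn u (Icc x b) := by
    rintro t ⟨hxt, htb⟩
    rcases hxt.eq_or_lt with rfl | hxt
    · exact hu'.self_of_nhds.continuousAt.continuousWithinAt
    · exact (hb ⟨hxt, htb⟩).1.1.continuousAt.continuousWithinAt
  obtain ⟨ξ, hξ, hmvt⟩ := exists_hasDerivAt_eq_slope u u' hxb hcont
    fun t ht => (hb ⟨ht.1, ht.2.le⟩).1.1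
  have hpos : 0 < u' ξ := by
    have := (hb ⟨hξ.1, hξ.2.le⟩).2
    rwa [slope_def_field, hzero, sub_zero, div_pos_iff_of_pos_right (sub_pos.mpr hξ.1)] at this
  rw [hmvt, div_pos_iff_of_pos_right (sub_pos.mpr hxb), sub_pos] at hpos
  exact (hb ⟨hxb, le_rfl⟩).1.2.not_gt hpos

theorem IsLocalMin.hasDerivAt_deriv_nonneg {u u' : ℝ → ℝ} {x c : ℝ} (hmin : IsLocalMin u x)
    (hu' : ∀ᶠ t in 𝓝 x, HasDerivAt u (u' t) t) (hu'' : HasDerivAt u' c x) : 0 ≤ c :=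
  neg_nonpos.mp <| hmin.neg.hasDerivAt_deriv_nonpos (hu'.mono fun _ h => h.neg) hu''.neg

theorem tendsto_atTop_of_eventually_hasDerivAt_ge {g g' : ℝ → ℝ} {m : ℝ} (hm : 0 < m)
    (h : ∀ᶠ x in atTop, HasDerivAt g (g' x) x ∧ m ≤ g' x) : Tendsto g atTop atTop := by
  obtain ⟨a, ha⟩ := eventually_atTop.mp h
  have hder : ∀ x ∈ Ici a, HasDerivAt (fun x => g x - m * x) (g' x - m) x := fun x hx =>
    ((ha x hx).1.sub ((hasDerivAt_id' x).const_mul m)).congr_deriv (by ring)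
  have hmono : MonotoneOn (fun x => g x - m * x) (Ici a) := by
    refine monotoneOn_of_hasDerivWithinAt_nonneg (f' := fun x => g' x - m) (convex_Ici a)
      (fun x hx => (hder x hx).continuousAt.continuousWithinAt) (fun x hx => ?_) (fun x hx => ?_)
    all_goals rw [interior_Ici] at hx
    · exact (hder x (mem_Ici_of_Ioi hx)).hasDerivWithinAt
    · exact sub_nonneg.mpr (ha x (mem_Ici_of_Ioi hx)).2
  refine tendsto_atTop_mono' _ ?_ (tendsto_atTop_add_const_left _ (g a - m * a)
    (tendsto_id.const_mul_atTop hm))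
  filter_upwards [eventually_ge_atTop a] with x hx
  have := hmono self_mem_Ici hx hx
  simp only [id]
  linarith

theorem tendsto_atTop_of_tendsto_deriv2_pos {u u' u'' : ℝ → ℝ} {c : ℝ} (hc : 0 < c)
    (hu' : ∀ᶠ x in atTop, HasDerivAt u (u' x) x)
    (hu'' : ∀ᶠ x in atTop, HasDerivAt u' (u'' x) x) (hlim : Tendsto u'' atTop (𝓝 c)) :
    Tendsto u atTop atTop := by
  have hu'_top : Tendsto u' atTop atTop :=
    tendsto_atTop_of_eventually_hasDerivAt_ge (half_pos hc)
      (hu''.and (hlim.eventually (eventually_ge_nhds (half_lt_self hc))))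
  exact tendsto_atTop_of_eventually_hasDerivAt_ge one_pos
    (hu'.and (tendsto_atTop.mp hu'_top 1))

theorem eq_zero_of_tendsto_deriv2 {u u' u'' : ℝ → ℝ} {l c : ℝ}
    (hu : Tendsto u atTop (𝓝 l)) (hu' : ∀ᶠ x in atTop, HasDerivAt u (u' x) x)
    (hu'' : ∀ᶠ x in atTop, HasDerivAt u' (u'' x) x) (hlim : Tendsto u'' atTop (𝓝 c)) :
    c = 0 := by
  rcases lt_trichotomy c 0 with hc | hc | hc
  · have := tendsto_atTop_of_tendsto_deriv2_pos (neg_pos.mpr hc)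
      (hu'.mono fun x hx => hx.neg) (hu''.mono fun x hx => hx.neg) hlim.neg
    exact absurd this (not_tendsto_atTop_of_tendsto_nhds hu.neg)
  · exact hc
  · exact absurd (tendsto_atTop_of_tendsto_deriv2_pos hc hu' hu'' hlim)
      (not_tendsto_atTop_of_tendsto_nhds hu)

theorem strictMonoOn_Ici_of_strictAntiOn_deriv {u u' : ℝ → ℝ} {a : ℝ}
    (hu : ∀ x ∈ Ici a, HasDerivAt u (u' x) x) (hanti : StrictAntiOn u' (Ici a))
    (hbdd : BddBelow (u '' Ici a)) : StrictMonoOn u (Ici a) := by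
  have hnonneg : ∀ x ∈ Ici a, 0 ≤ u' x := by
    intro x hx
    by_contra! hneg
    have hu_bot : Tendsto (fun t => -u t) atTop atTop := by
      refine tendsto_atTop_of_eventually_hasDerivAt_ge (g' := fun t => -u' t)
        (neg_pos.mpr hneg) ?_
      filter_upwards [eventually_ge_atTop x] with t ht
      exact ⟨(hu t (le_trans hx ht)).neg, neg_le_neg (hanti.antitoneOn hx (le_trans hx ht) ht)⟩
    obtain ⟨b, hb⟩ := hbdd
    obtain ⟨t, hbt, hxt⟩ :=
      ((tendsto_atTop.mp hu_bot (-b + 1)).and (eventually_ge_atTop x)).exists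
    linarith [hb (mem_image_of_mem u (show t ∈ Ici a from le_trans hx hxt))]
  refine strictMonoOn_of_hasDerivWithinAt_pos (convex_Ici a)
    (fun x hx => (hu x hx).continuousAt.continuousWithinAt) (f' := u') ?_ ?_
  · intro x hx
    rw [interior_Ici] at hx
    exact (hu x (mem_Ici_of_Ioi hx)).hasDerivWithinAt
  · intro x hx
    rw [interior_Ici] at hx
    have hx' : x ∈ Ici a := mem_Ici_of_Ioi hx
    have hx1 : x + 1 ∈ Ici a := by simp only [mem_Ici]; linarith [hx.out]
    exact lt_of_le_of_lt (hnonneg _ hx1) (hanti hx' hx1 (lt_add_one x))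

theorem MonotoneOn.exists_tendsto_atTop {u : ℝ → ℝ} {a : ℝ} (hmono : MonotoneOn u (Ici a))
    (hbdd : BddAbove (u '' Ici a)) : ∃ l, Tendsto u atTop (𝓝 l) := by
  have hg : Monotone fun x => u (max x a) := fun x y hxy =>
    hmono (le_max_right x a) (le_max_right y a) (max_le_max hxy le_rfl)
  have hg_bdd : BddAbove (range fun x => u (max x a)) :=
    hbdd.mono (range_subset_iff.mpr fun x => mem_image_of_mem u (le_max_right x a))
  refine ⟨_, (tendsto_atTop_ciSup hg hg_bdd).congr' ?_⟩
  filter_upwards [eventually_ge_atTop a] with x hx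
  rw [max_eq_left hx]

structure IsPositiveSolution (d lam : ℝ) (f u u' u'' : ℝ → ℝ) : Prop where
  pos : ∀ x ∈ Ioi (0 : ℝ), 0 < u x
  hasDerivAt : ∀ x ∈ Ioi (0 : ℝ), HasDerivAt u (u' x) x
  hasDerivAt_deriv : ∀ x ∈ Ioi (0 : ℝ), HasDerivAt u' (u'' x) x
  ode : ∀ x ∈ Ioi (0 : ℝ), -(d * u'' x) = u x * (f x - lam * u x)

namespace IsPositiveSolution

variable {d lam L : ℝ} {f u u' u'' : ℝ → ℝ} {x y : ℝ}

theorem eventually_hasDerivAt (h : IsPositiveSolution d lam f u u' u'') (hx : 0 < x) :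
    ∀ᶠ t in 𝓝 x, HasDerivAt u (u' t) t :=
  eventually_of_mem (Ioi_mem_nhds hx) h.hasDerivAt

theorem lam_mul_le_of_isLocalMax (h : IsPositiveSolution d lam f u u' u'') (hd : 0 < d)
    (hx : 0 < x) (hmax : IsLocalMax u x) : lam * u x ≤ f x := by
  have hu'' := hmax.hasDerivAt_deriv_nonpos (h.eventually_hasDerivAt hx) (h.hasDerivAt_deriv x hx)
  have hode := h.ode x hx
  have hux := h.pos x hx
  nlinarith

theorem le_lam_mul_of_isLocalMin (h : IsPositiveSolution d lam f u u' u'') (hd : 0 < d)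
    (hx : 0 < x) (hmin : IsLocalMin u x) : f x ≤ lam * u x := by
  have hu'' := hmin.hasDerivAt_deriv_nonneg (h.eventually_hasDerivAt hx) (h.hasDerivAt_deriv x hx)
  have hode := h.ode x hx
  have hux := h.pos x hx
  nlinarith

theorem deriv2_neg_of_lam_mul_lt (h : IsPositiveSolution d lam f u u' u'') (hd : 0 < d)
    (hx : 0 < x) (hlt : lam * u x < f x) : u'' x < 0 := by
  have hode := h.ode x hx
  have hux := h.pos x hx
  nlinarith

theorem le_of_isLocalMax_of_isLocalMin (h : IsPositiveSolution d lam f u u' u'') (hd : 0 < d)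
    (hlam : 0 < lam) (hf : MonotoneOn f (Ici 0)) (hx : 0 < x) (hxy : x ≤ y)
    (hmax : IsLocalMax u x) (hmin : IsLocalMin u y) : u x ≤ u y := by
  have hy : 0 < y := hx.trans_le hxy
  have := calc
    lam * u x ≤ f x := h.lam_mul_le_of_isLocalMax hd hx hmax
    _ ≤ f y := hf hx.le hy.le hxy
    _ ≤ lam * u y := h.le_lam_mul_of_isLocalMin hd hy hmin
  exact le_of_mul_le_mul_left this hlam

theorem monotoneOn (h : IsPositiveSolution d lam f u u' u'') (hd : 0 < d) (hlam : 0 < lam)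
    (hf : MonotoneOn f (Ici 0)) (hcont : ContinuousOn u (Ici 0)) (hu0 : u 0 = 0) :
    MonotoneOn u (Ici 0) := by
  intro x hx y hy hxy
  by_contra! hlt
  have hy0 : 0 < y := hx.trans_lt (hxy.lt_of_ne (by rintro rfl; exact hlt.false))
  obtain ⟨p, hp, hpmax⟩ := isCompact_Icc.exists_isMaxOn (nonempty_Icc.mpr hy0.le)
    (hcont.mono Icc_subset_Ici_self)
  have hyp : u y < u p := hlt.trans_le (hpmax ⟨hx, hxy⟩)
  have hp0 : 0 < p := hp.1.lt_of_ne (by rintro rfl; linarith [h.pos y hy0])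
  have hpy : p < y := hp.2.lt_of_ne (by rintro rfl; exact hyp.false)
  have hp_max : IsLocalMax u p := hpmax.isLocalMax (Icc_mem_nhds hp0 hpy)
  -- a later interior minimum would lie below the maximum `u p`, which the ODE forbids
  have hmin : ∀ T ∈ Ici y, ∀ s ∈ Icc p T, u T ≤ u s := by
    intro T hT
    obtain ⟨q, hq, hqmin⟩ := isCompact_Icc.exists_isMinOn (nonempty_Icc.mpr (hpy.le.trans hT))
      (hcont.mono fun z hz => hp0.le.trans hz.1)
    have hqp : u q < u p := (hqmin ⟨hpy.le, hT⟩).trans_lt hyp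
    have hpq : p < q := hq.1.lt_of_ne (by rintro rfl; exact hqp.false)
    rcases hq.2.eq_or_lt with rfl | hqT
    · exact hqmin
    · exact absurd (h.le_of_isLocalMax_of_isLocalMin hd hlam hf hp0 hpq.le hp_max
        (hqmin.isLocalMin (Icc_mem_nhds hpq hqT))) hqp.not_ge
  have hconcave : StrictAntiOn u' (Ici y) := by
    refine strictAntiOn_of_hasDerivWithinAt_neg (f' := u'') (convex_Ici y)
      (fun t ht => (h.hasDerivAt_deriv t (hy0.trans_le ht)).continuousAt.continuousWithinAt)
      (fun t ht => ?_) (fun t ht => ?_)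
    all_goals rw [interior_Ici] at ht
    · exact (h.hasDerivAt_deriv t (hy0.trans ht)).hasDerivWithinAt
    · refine h.deriv2_neg_of_lam_mul_lt hd (hy0.trans ht) ?_
      calc lam * u t ≤ lam * u y := by
            gcongr; exact hmin t (mem_Ici_of_Ioi ht) y ⟨hpy.le, le_of_lt ht⟩
        _ < lam * u p := by gcongr
        _ ≤ f p := h.lam_mul_le_of_isLocalMax hd hp0 hp_max
        _ ≤ f t := hf hp0.le (hy0.trans ht).le (hpy.trans ht).le
  have hincr : StrictMonoOn u (Ici y) :=
    strictMonoOn_Ici_of_strictAntiOn_deriv (fun t ht => h.hasDerivAt t (hy0.trans_le ht))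
      hconcave ⟨0, forall_mem_image.mpr fun t ht => (h.pos t (hy0.trans_le ht)).le⟩
  exact (hincr self_mem_Ici (by simp) (lt_add_one y)).not_ge
    (hmin (y + 1) (by simp) y ⟨hpy.le, by simp⟩)

theorem eq_div_of_tendsto (h : IsPositiveSolution d lam f u u' u'') (hd : 0 < d)
    (hlam : 0 < lam) (hf : Tendsto f atTop (𝓝 L)) {l : ℝ} (hu : Tendsto u atTop (𝓝 l))
    (hl : 0 < l) : l = L / lam := by
  have hu'' : Tendsto u'' atTop (𝓝 (l * (lam * l - L) / d)) := by
    refine ((hu.mul ((hu.const_mul lam).sub hf)).div_const d).congr' ?_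
    filter_upwards [eventually_gt_atTop 0] with x hx
    rw [div_eq_iff hd.ne']
    linear_combination h.ode x hx
  have hzero := eq_zero_of_tendsto_deriv2 hu (eventually_gt_atTop 0 |>.mono h.hasDerivAt)
    (eventually_gt_atTop 0 |>.mono h.hasDerivAt_deriv) hu''
  rw [eq_div_iff hlam.ne']
  field_simp at hzero
  nlinarith

end IsPositiveSolution

theorem stmt2_general (d lam L : ℝ) (hd : 0 < d) (hlam : 0 < lam)
    (f u u' u'' : ℝ → ℝ)
    (hf_mono : MonotoneOn f (Ici 0))
    (hf_lim : Tendsto f atTop (nhds L))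
    (hu_cont : ContinuousOn u (Ici 0))
    (hu0 : u 0 = 0)
    (hu_pos : ∀ x ∈ Ioi (0:ℝ), 0 < u x)
    (B : ℝ) (hu_bdd : ∀ x ∈ Ici (0:ℝ), u x ≤ B)
    (hu' : ∀ x ∈ Ioi (0:ℝ), HasDerivAt u (u' x) x)
    (hu'' : ∀ x ∈ Ioi (0:ℝ), HasDerivAt u' (u'' x) x)
    (hode : ∀ x ∈ Ioi (0:ℝ), -(d * u'' x) = u x * (f x - lam * u x)) :
    MonotoneOn u (Ici 0) ∧ Tendsto u atTop (nhds (L / lam)) := by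
  have h : IsPositiveSolution d lam f u u' u'' := ⟨hu_pos, hu', hu'', hode⟩
  have hmono := h.monotoneOn hd hlam hf_mono hu_cont hu0
  obtain ⟨l, hl⟩ := hmono.exists_tendsto_atTop ⟨B, forall_mem_image.mpr hu_bdd⟩
  have hl_pos : 0 < l := (hu_pos 1 (mem_Ioi.mpr one_pos)).trans_le <| ge_of_tendsto hl <|
    (eventually_ge_atTop 1).mono fun x hx =>
      hmono (mem_Ici.mpr zero_le_one) (mem_Ici.mpr (zero_le_one.trans hx)) hx
  exact ⟨hmono, h.eq_div_of_tendsto hd hlam hf_lim hl hl_pos ▸ hl⟩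

/-- if `f` is nondecreasing with limit `L` at infinity, then the positive
solution `u` of the half-line problem is nondecreasing and `u(x) → L/λ` as `x → ∞`. -/
theorem stmt2 (d lam L : ℝ) (hd : 0 < d) (hlam : 0 < lam)
    (f u u' u'' : ℝ → ℝ)
    (hf_cont : ContinuousOn f (Ici 0))
    (f₀ : ℝ) (hf₀ : 0 < f₀) (hf_lb : ∀ x ∈ Ici (0:ℝ), f₀ ≤ f x)
    (F : ℝ) (hf_ub : ∀ x ∈ Ici (0:ℝ), f x ≤ F)
    (hf_mono : MonotoneOn f (Ici 0))
    (hf_lim : Tendsto f atTop (nhds L))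
    (hu_cont : ContinuousOn u (Ici 0))
    (hu0 : u 0 = 0)
    (hu_pos : ∀ x ∈ Ioi (0:ℝ), 0 < u x)
    (B : ℝ) (hu_bdd : ∀ x ∈ Ici (0:ℝ), u x ≤ B)
    (hu' : ∀ x ∈ Ioi (0:ℝ), HasDerivAt u (u' x) x)
    (hu'' : ∀ x ∈ Ioi (0:ℝ), HasDerivAt u' (u'' x) x)
    (hode : ∀ x ∈ Ioi (0:ℝ), -(d * u'' x) = u x * (f x - lam * u x)) :
    MonotoneOn u (Ici 0) ∧ Tendsto u atTop (nhds (L / lam)) :=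
  stmt2_general d lam L hd hlam f u u' u'' hf_mono hf_lim hu_cont hu0 hu_pos B hu_bdd hu' hu'' hode
end

section
/- Suppose a, b, c > 0 with a(b+c) < 1. Let ū be the unique positive increasing solution of -u'' = u(1-u) on (0,∞) with u(0)=0 and u(∞)=1, and let v̄ be the unique positive solution of -d v'' = v(c - v + b ū(x)) with v(0)=0. Then v̄'(x) > 0 fails in general but lim_{x→∞} v̄(x) = b + c, and v̄(x) ≤ b + c for all x ≥ 0. -/
/-!
On `(0, ∞)` the equation reads `d v̄'' = v̄ (v̄ - c - b ū)` with `ū ≤ 1`, since `ū` increases to `1`.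

Where `v̄ > b + c` we get `v̄'' > 0`, so `v̄` has no interior maximum above `b + c`. As `v̄(0) = 0`,
once `v̄` exceeds `b + c` it keeps increasing and, being convex from then on, grows linearly,
contradicting boundedness.

For the limit fix `ε > 0`. Since `ū → 1`, for large `x` the inequality `v̄ < b + c - ε` forces
`d v̄'' ≤ -(ε/2) v̄ < 0`. Hence `v̄` has no interior minimum below `b + c - ε`, and it cannot stay
below `b + c - ε` forever: a positive concave function is nondecreasing, so `v̄'' ≤ -const`
eventually and `v̄'` would tend to `-∞`.
-/

open Set Filter Topology

theorem le_of_tendsto_of_deriv_nonneg {g g' : ℝ → ℝ} {p l : ℝ}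
    (hg : ∀ x ∈ Ioi p, HasDerivAt g (g' x) x) (hg' : ∀ x ∈ Ioi p, 0 ≤ g' x)
    (hl : Tendsto g atTop (𝓝 l)) : ∀ x ∈ Ioi p, g x ≤ l := by
  have hmono : MonotoneOn g (Ioi p) :=
    monotoneOn_of_hasDerivWithinAt_nonneg (convex_Ioi p)
      (fun x hx => (hg x hx).continuousAt.continuousWithinAt)
      (fun x hx => (hg x (interior_subset hx)).hasDerivWithinAt)
      (fun x hx => hg' x (interior_subset hx))
  intro x hx
  exact ge_of_tendsto hl ((eventually_ge_atTop x).mono fun y hy => hmono hx (hx.trans_le hy) hy)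

section Growth

variable {f f' f'' : ℝ → ℝ} {x m : ℝ}

theorem tendsto_atTop_of_le_deriv (hm : 0 < m) (hf : ∀ t ∈ Ici x, HasDerivAt f (f' t) t)
    (hf' : ∀ t ∈ Ioi x, m ≤ f' t) : Tendsto f atTop atTop := by
  have hderiv : ∀ t ∈ Ici x, HasDerivAt (fun s => f s - m * s) (f' t - m) t := fun t ht => by
    simpa using (hf t ht).fun_sub ((hasDerivAt_id' t).const_mul m)
  have hmono : MonotoneOn (fun s => f s - m * s) (Ici x) := by
    refine monotoneOn_of_hasDerivWithinAt_nonneg (f' := fun t => f' t - m) (convex_Ici x)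
      (fun t ht => (hderiv t ht).continuousAt.continuousWithinAt) (fun t ht => ?_) (fun t ht => ?_)
    · exact (hderiv t (interior_subset ht)).hasDerivWithinAt
    · rw [interior_Ici] at ht
      linarith [hf' t ht]
  refine tendsto_atTop_mono' _ ?_
    (tendsto_atTop_add_const_left _ (f x - m * x) (tendsto_id.const_mul_atTop hm))
  filter_upwards [eventually_ge_atTop x] with t ht
  have := hmono self_mem_Ici ht ht
  simp only [id] at this ⊢
  linarith

theorem tendsto_atBot_of_deriv_le (hm : m < 0) (hf : ∀ t ∈ Ici x, HasDerivAt f (f' t) t)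
    (hf' : ∀ t ∈ Ioi x, f' t ≤ m) : Tendsto f atTop atBot :=
  tendsto_neg_atTop_iff.1 <| tendsto_atTop_of_le_deriv (f' := fun t => -f' t) (neg_pos.2 hm)
    (fun t ht => (hf t ht).neg) (fun t ht => neg_le_neg (hf' t ht))

theorem tendsto_atTop_of_deriv_nonneg_of_deriv2_pos (hf : ∀ t ∈ Ici x, HasDerivAt f (f' t) t)
    (hf' : ∀ t ∈ Ici x, HasDerivAt f' (f'' t) t) (h0 : 0 ≤ f' x) (h'' : ∀ t ∈ Ioi x, 0 < f'' t) :
    Tendsto f atTop atTop := by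
  have hmono : StrictMonoOn f' (Ici x) := by
    refine strictMonoOn_of_hasDerivWithinAt_pos (convex_Ici x)
      (fun t ht => (hf' t ht).continuousAt.continuousWithinAt)
      (fun t ht => (hf' t (interior_subset ht)).hasDerivWithinAt) ?_
    rwa [interior_Ici]
  have hx1 : x ≤ x + 1 := by simp
  refine tendsto_atTop_of_le_deriv (x := x + 1) (h0.trans_lt (hmono self_mem_Ici hx1 (by simp)))
    (fun t ht => hf t (hx1.trans ht)) (fun t ht => (hmono hx1 (hx1.trans ht.le) ht).le)

theorem tendsto_atBot_of_deriv_nonpos_of_deriv2_neg (hf : ∀ t ∈ Ici x, HasDerivAt f (f' t) t)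
    (hf' : ∀ t ∈ Ici x, HasDerivAt f' (f'' t) t) (h0 : f' x ≤ 0) (h'' : ∀ t ∈ Ioi x, f'' t < 0) :
    Tendsto f atTop atBot :=
  tendsto_neg_atTop_iff.1 <| tendsto_atTop_of_deriv_nonneg_of_deriv2_pos (f' := fun t => -f' t)
    (f'' := fun t => -f'' t) (fun t ht => (hf t ht).neg) (fun t ht => (hf' t ht).neg)
    (neg_nonneg.2 h0) (fun t ht => neg_pos.2 (h'' t ht))

end Growth

theorem IsLocalMin.nonneg_of_hasDerivAt_deriv {f f' : ℝ → ℝ} {x f'' : ℝ} (h : IsLocalMin f x)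
    (hf : ∀ᶠ y in 𝓝 x, HasDerivAt f (f' y) y) (hf' : HasDerivAt f' f'' x) : 0 ≤ f'' := by
  obtain ⟨l, u, hxlu, hlu⟩ := mem_nhds_iff_exists_Ioo_subset.1 (hf.and h)
  have hf'x : f' x = 0 := h.hasDerivAt_eq_zero (hlu hxlu).1
  by_contra! hneg
  have hright : ∀ᶠ y in 𝓝[>] x, f' y < 0 := by
    filter_upwards [(hasDerivAt_iff_tendsto_slope.1 hf').mono_left (nhdsGT_le_nhdsNE x)
      (gt_mem_nhds hneg), self_mem_nhdsWithin] with y hy hxy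
    rw [mem_preimage, slope_def_field, hf'x, sub_zero] at hy
    exact neg_of_div_neg_left hy (sub_nonneg.2 (le_of_lt hxy))
  obtain ⟨v, hxv, hv⟩ := mem_nhdsGT_iff_exists_Ioo_subset.1 hright
  obtain ⟨y, hxy, hyuv⟩ := exists_between (lt_min hxlu.2 hxv)
  have hIcc : Icc x y ⊆ Ioo l u := fun t ht =>
    ⟨hxlu.1.trans_le ht.1, ht.2.trans_lt (hyuv.trans_le (min_le_left _ _))⟩
  obtain ⟨c, hc, hslope⟩ := exists_hasDerivAt_eq_slope f f' hxy
    (fun t ht => (hlu (hIcc ht)).1.continuousAt.continuousWithinAt)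
    (fun t ht => (hlu (hIcc (Ioo_subset_Icc_self ht))).1)
  have hc_nonneg : 0 ≤ f' c := hslope ▸
    div_nonneg (sub_nonneg.2 (hlu (hIcc (right_mem_Icc.2 hxy.le))).2) (sub_nonneg.2 hxy.le)
  exact (hv ⟨hc.1, hc.2.trans (hyuv.trans_le (min_le_right _ _))⟩).not_ge hc_nonneg

theorem IsLocalMax.nonpos_of_hasDerivAt_deriv {f f' : ℝ → ℝ} {x f'' : ℝ} (h : IsLocalMax f x)
    (hf : ∀ᶠ y in 𝓝 x, HasDerivAt f (f' y) y) (hf' : HasDerivAt f' f'' x) : f'' ≤ 0 :=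
  neg_nonneg.1 <| h.neg.nonneg_of_hasDerivAt_deriv (f' := fun y => -f' y)
    (hf.mono fun _ hy => hy.neg) hf'.neg

section MaximumPrinciple

variable {f f' f'' : ℝ → ℝ} {p L : ℝ}

theorem monotoneOn_Ici_of_deriv2_pos (hcont : ContinuousOn f (Ici p))
    (hf : ∀ x ∈ Ioi p, HasDerivAt f (f' x) x) (hf' : ∀ x ∈ Ioi p, HasDerivAt f' (f'' x) x)
    (hp : f p ≤ L) (h'' : ∀ x ∈ Ioi p, L < f x → 0 < f'' x) {x₀ : ℝ} (hx₀ : x₀ ∈ Ici p)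
    (hL : L < f x₀) : MonotoneOn f (Ici x₀) := by
  intro x hx y _ hxy
  obtain ⟨ξ, hξ, hmax⟩ := isCompact_Icc.exists_isMaxOn (nonempty_Icc.2 (hx₀.trans (hx.trans hxy)))
    (hcont.mono Icc_subset_Ici_self)
  suffices ξ = y from this ▸ hmax ⟨hx₀.trans hx, hxy⟩
  have hLξ : L < f ξ := hL.trans_le (hmax ⟨hx₀, hx.trans hxy⟩)
  have hpξ : p < ξ := hξ.1.lt_of_ne (by rintro rfl; linarith)
  refine hξ.2.eq_or_lt.resolve_right fun hξy => ?_
  have hloc : IsLocalMax f ξ := hmax.isLocalMax (Icc_mem_nhds hpξ hξy)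
  exact (hloc.nonpos_of_hasDerivAt_deriv ((eventually_gt_nhds hpξ).mono hf) (hf' ξ hpξ)).not_gt
    (h'' ξ hpξ hLξ)

theorem le_of_bddAbove_of_deriv2_pos (hcont : ContinuousOn f (Ici p))
    (hf : ∀ x ∈ Ioi p, HasDerivAt f (f' x) x) (hf' : ∀ x ∈ Ioi p, HasDerivAt f' (f'' x) x)
    (hbdd : BddAbove (f '' Ici p)) (hp : f p ≤ L) (h'' : ∀ x ∈ Ioi p, L < f x → 0 < f'' x) :
    ∀ x ∈ Ici p, f x ≤ L := by
  intro x₀ hx₀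
  by_contra! hL
  have hpx₀ : p < x₀ := hx₀.lt_of_ne (by rintro rfl; linarith)
  have hmono := monotoneOn_Ici_of_deriv2_pos hcont hf hf' hp h'' hx₀ hL
  have hp_lt : ∀ t ∈ Ici x₀, p < t := fun t ht => hpx₀.trans_le ht
  obtain ⟨ξ, hξ, hslope⟩ := exists_hasDerivAt_eq_slope f f' (lt_add_one x₀)
    (fun t ht => (hf t (hp_lt t ht.1)).continuousAt.continuousWithinAt)
    (fun t ht => hf t (hp_lt t ht.1.le))
  have hξ_nonneg : 0 ≤ f' ξ := hslope ▸ div_nonneg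
    (sub_nonneg.2 (hmono self_mem_Ici (by simp) (by simp))) (by simp)
  have hξx₀ : x₀ ≤ ξ := hξ.1.le
  have htop : Tendsto f atTop atTop :=
    tendsto_atTop_of_deriv_nonneg_of_deriv2_pos (x := ξ)
      (fun t ht => hf t (hp_lt t (hξx₀.trans ht))) (fun t ht => hf' t (hp_lt t (hξx₀.trans ht)))
      hξ_nonneg fun t ht => h'' t (hp_lt t (hξx₀.trans ht.le))
        (hL.trans_le (hmono self_mem_Ici (hξx₀.trans ht.le) (hξx₀.trans ht.le)))
  obtain ⟨B, hB⟩ := hbdd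
  obtain ⟨t, htB, hpt⟩ := ((htop.eventually_gt_atTop B).and (eventually_ge_atTop p)).exists
  exact htB.not_ge (hB (mem_image_of_mem f hpt))

end MaximumPrinciple

section MinimumPrinciple

variable {f f' f'' : ℝ → ℝ} {m : ℝ}

theorem le_of_le_of_le_of_deriv2_neg {x z : ℝ} (hf : ∀ t ∈ Icc x z, HasDerivAt f (f' t) t)
    (hf' : ∀ t ∈ Ioo x z, HasDerivAt f' (f'' t) t) (h'' : ∀ t ∈ Ioo x z, f t < m → f'' t < 0)
    (hx : m ≤ f x) (hz : m ≤ f z) : ∀ y ∈ Icc x z, m ≤ f y := by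
  intro y hy
  by_contra! hym
  obtain ⟨ξ, hξ, hmin⟩ := isCompact_Icc.exists_isMinOn ⟨y, hy⟩
    (fun t ht => (hf t ht).continuousAt.continuousWithinAt)
  have hξm : f ξ < m := (hmin hy).trans_lt hym
  have hxξ : x < ξ := hξ.1.lt_of_ne (by rintro rfl; linarith)
  have hξz : ξ < z := hξ.2.lt_of_ne (by rintro rfl; linarith)
  have hloc : IsLocalMin f ξ := hmin.isLocalMin (Icc_mem_nhds hxξ hξz)
  have hderiv : ∀ᶠ t in 𝓝 ξ, HasDerivAt f (f' t) t :=
    Filter.mem_of_superset (Ioo_mem_nhds hxξ hξz) fun t ht => hf t (Ioo_subset_Icc_self ht)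
  exact (hloc.nonneg_of_hasDerivAt_deriv hderiv (hf' ξ ⟨hxξ, hξz⟩)).not_gt
    (h'' ξ ⟨hxξ, hξz⟩ hξm)

variable {κ : ℝ}

theorem frequently_le_of_deriv2_le_neg_mul (hκ : 0 < κ)
    (hf : ∀ᶠ x in atTop, HasDerivAt f (f' x) x) (hf' : ∀ᶠ x in atTop, HasDerivAt f' (f'' x) x)
    (hpos : ∀ᶠ x in atTop, 0 < f x) (h'' : ∀ᶠ x in atTop, f x < m → f'' x ≤ -κ * f x) :
    ∃ᶠ x in atTop, m ≤ f x := by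
  simp only [Filter.Frequently, not_le]
  intro hlt
  obtain ⟨X, hX⟩ := eventually_atTop.1 (hf.and (hf'.and (hpos.and (h''.and hlt))))
  have hconc : ∀ t ∈ Ici X, f'' t ≤ -κ * f t := fun t ht => (hX t ht).2.2.2.1 (hX t ht).2.2.2.2
  have hneg : ∀ t ∈ Ici X, f'' t < 0 := fun t ht =>
    (hconc t ht).trans_lt (by nlinarith [(hX t ht).2.2.1])
  have hincr : ∀ t ∈ Ici X, 0 < f' t := by
    intro t ht
    by_contra! h
    have hbot := tendsto_atBot_of_deriv_nonpos_of_deriv2_neg (x := t)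
      (fun s hs => (hX s (ht.trans hs)).1) (fun s hs => (hX s (ht.trans hs)).2.1) h
      (fun s hs => hneg s (mem_Ici.2 (ht.trans hs.le)))
    obtain ⟨s, hs, hts⟩ := ((hbot.eventually_lt_atBot 0).and (eventually_ge_atTop t)).exists
    exact hs.not_gt (hX s (ht.trans hts)).2.2.1
  have hmono : MonotoneOn f (Ici X) :=
    monotoneOn_of_hasDerivWithinAt_nonneg (convex_Ici X)
      (fun t ht => (hX t ht).1.continuousAt.continuousWithinAt)
      (fun t ht => (hX t (interior_subset ht)).1.hasDerivWithinAt)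
      (fun t ht => (hincr t (interior_subset ht)).le)
  have hbot : Tendsto f' atTop atBot :=
    tendsto_atBot_of_deriv_le (x := X) (m := -κ * f X)
      (by nlinarith [(hX X le_rfl).2.2.1]) (fun t ht => (hX t ht).2.1)
      fun t ht => (hconc t (mem_Ici.2 ht.le)).trans <| by
        nlinarith [hmono self_mem_Ici (mem_Ici.2 ht.le) ht.le]
  obtain ⟨t, ht, hXt⟩ := ((hbot.eventually_lt_atBot 0).and (eventually_ge_atTop X)).exists
  exact ht.not_gt (hincr t hXt)

theorem eventually_le_of_deriv2_le_neg_mul (hκ : 0 < κ)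
    (hf : ∀ᶠ x in atTop, HasDerivAt f (f' x) x) (hf' : ∀ᶠ x in atTop, HasDerivAt f' (f'' x) x)
    (hpos : ∀ᶠ x in atTop, 0 < f x) (h'' : ∀ᶠ x in atTop, f x < m → f'' x ≤ -κ * f x) :
    ∀ᶠ x in atTop, m ≤ f x := by
  have hfreq := frequently_le_of_deriv2_le_neg_mul hκ hf hf' hpos h''
  obtain ⟨X, hX⟩ := eventually_atTop.1 (hf.and (hf'.and (hpos.and h'')))
  obtain ⟨x, hmx, hXx⟩ := (hfreq.and_eventually (eventually_ge_atTop X)).exists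
  filter_upwards [eventually_ge_atTop x] with y hxy
  obtain ⟨z, hyz, hmz⟩ := frequently_atTop.1 hfreq y
  refine le_of_le_of_le_of_deriv2_neg (fun t ht => (hX t (hXx.trans ht.1)).1)
    (fun t ht => (hX t (hXx.trans ht.1.le)).2.1) (fun t ht hlt => ?_) hmx hmz y ⟨hxy, hyz⟩
  obtain ⟨-, -, hft, hconc⟩ := hX t (hXx.trans ht.1.le)
  nlinarith [hconc hlt]

end MinimumPrinciple

theorem stmt4_general (b c d : ℝ) (hb : 0 < b) (hc : 0 < c) (hd : 0 < d)
    (ubar ubar' vbar vbar' vbar'' : ℝ → ℝ)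
    (hu' : ∀ x ∈ Ioi (0:ℝ), HasDerivAt ubar (ubar' x) x)
    (hu'pos : ∀ x ∈ Ioi (0:ℝ), 0 < ubar' x)
    (hu_lim : Tendsto ubar atTop (nhds 1))
    (hv_cont : ContinuousOn vbar (Ici 0)) (hv0 : vbar 0 = 0)
    (hv_pos : ∀ x ∈ Ioi (0:ℝ), 0 < vbar x)
    (B : ℝ) (hv_bdd : ∀ x ∈ Ici (0:ℝ), vbar x ≤ B)
    (hv' : ∀ x ∈ Ioi (0:ℝ), HasDerivAt vbar (vbar' x) x)
    (hv'' : ∀ x ∈ Ioi (0:ℝ), HasDerivAt vbar' (vbar'' x) x)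
    (hv_ode : ∀ x ∈ Ioi (0:ℝ), -(d * vbar'' x) = vbar x * (c - vbar x + b * ubar x)) :
    Tendsto vbar atTop (nhds (b + c)) ∧ ∀ x ∈ Ici (0:ℝ), vbar x ≤ b + c := by
  have hu_le : ∀ x ∈ Ioi (0:ℝ), ubar x ≤ 1 :=
    le_of_tendsto_of_deriv_nonneg hu' (fun x hx => (hu'pos x hx).le) hu_lim
  have hupper : ∀ x ∈ Ici (0:ℝ), vbar x ≤ b + c := by
    refine le_of_bddAbove_of_deriv2_pos hv_cont hv' hv'' ⟨B, forall_mem_image.2 hv_bdd⟩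
      (by rw [hv0]; positivity) fun x hx hvx => pos_of_mul_pos_right (a := d) ?_ hd.le
    have hbu : b * ubar x ≤ b := mul_le_of_le_one_right hb.le (hu_le x hx)
    nlinarith [hv_ode x hx, mul_pos (hv_pos x hx) (by linarith : 0 < vbar x - c - b * ubar x)]
  have hlower : ∀ ε > 0, ∀ᶠ x in atTop, b + c - ε ≤ vbar x := by
    intro ε hε
    have hbu : ∀ᶠ x in atTop, b - ε / 2 < b * ubar x :=
      (hu_lim.const_mul b).eventually (lt_mem_nhds (by linarith))
    refine eventually_le_of_deriv2_le_neg_mul (κ := ε / (2 * d)) (by positivity)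
      ((eventually_gt_atTop 0).mono hv') ((eventually_gt_atTop 0).mono hv'')
      ((eventually_gt_atTop 0).mono hv_pos) ?_
    filter_upwards [eventually_gt_atTop 0, hbu] with x hx hbux hvx
    rw [show -(ε / (2 * d)) * vbar x = -(ε / 2 * vbar x) / d by field_simp, le_div_iff₀ hd]
    nlinarith [hv_ode x hx, hv_pos x hx]
  refine ⟨tendsto_order.2 ⟨fun a ha => ?_, fun a ha => ?_⟩, hupper⟩
  · filter_upwards [hlower ((b + c - a) / 2) (by linarith)] with x hx
    linarith
  · filter_upwards [eventually_ge_atTop 0] with x hx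
    exact (hupper x hx).trans_lt ha

/-- `v̄(x) → b + c` as `x → ∞` and `v̄ ≤ b + c` on `[0,∞)`. -/
theorem stmt4 (a b c d : ℝ) (ha : 0 < a) (hb : 0 < b) (hc : 0 < c) (hd : 0 < d)
    (habc : a * (b + c) < 1)
    (ubar ubar' ubar'' vbar vbar' vbar'' : ℝ → ℝ)
    (hu_cont : ContinuousOn ubar (Ici 0)) (hu0 : ubar 0 = 0)
    (hu_pos : ∀ x ∈ Ioi (0:ℝ), 0 < ubar x)
    (hu' : ∀ x ∈ Ioi (0:ℝ), HasDerivAt ubar (ubar' x) x)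
    (hu'' : ∀ x ∈ Ioi (0:ℝ), HasDerivAt ubar' (ubar'' x) x)
    (hu'pos : ∀ x ∈ Ioi (0:ℝ), 0 < ubar' x)
    (hu_ode : ∀ x ∈ Ioi (0:ℝ), -(ubar'' x) = ubar x * (1 - ubar x))
    (hu_lim : Tendsto ubar atTop (nhds 1))
    (hv_cont : ContinuousOn vbar (Ici 0)) (hv0 : vbar 0 = 0)
    (hv_pos : ∀ x ∈ Ioi (0:ℝ), 0 < vbar x)
    (B : ℝ) (hv_bdd : ∀ x ∈ Ici (0:ℝ), vbar x ≤ B)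
    (hv' : ∀ x ∈ Ioi (0:ℝ), HasDerivAt vbar (vbar' x) x)
    (hv'' : ∀ x ∈ Ioi (0:ℝ), HasDerivAt vbar' (vbar'' x) x)
    (hv_ode : ∀ x ∈ Ioi (0:ℝ), -(d * vbar'' x) = vbar x * (c - vbar x + b * ubar x)) :
    Tendsto vbar atTop (nhds (b + c)) ∧ ∀ x ∈ Ici (0:ℝ), vbar x ≤ b + c :=
  stmt4_general b c d hb hc hd ubar ubar' vbar vbar' vbar'' hu' hu'pos hu_lim hv_cont hv0 hv_pos B
    hv_bdd hv' hv'' hv_ode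
end

section
/- Let d, λ > 0, f bounded continuous with inf f > 0, K > (sup f)/λ. For large l, let ū_l be the unique positive solution of -d u'' = u(f(x) - λ u) on (0,l) with u(0) = 0, u(l) = K. Then ū_l(x) ≥ û(x) on [0,l] where û is the unique positive solution of the half-line problem with û(0)=0, and ū_l is nonincreasing in l. -/
/-!
A solution of `-d w'' = w (f - λ w)` is strictly convex wherever `w > sup f / λ`, so it has
no interior maximum above that level. This gives `ū_{l₂} < K` inside `(0, l₂)`, and
`û ≤ sup f / λ`: otherwise `û` would be increasing past some point and convex from there on,
hence unbounded.

Both claims then follow from a comparison principle: if `u > 0` and `v` solve the equation on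
`(p, q)` with `v(p) ≤ u(p)` and `v(q) < u(q)`, then `v ≤ u`. On a maximal interval `(a, b)`
where `v > u`, the Wronskian `W = u v' - v u'` satisfies `d W' = λ u v (v - u) > 0` and
`W(b) ≤ 0`, so `W < 0` on `(a, b)`. But near `a` there are points where `(v - u)' > 0`, and
there `W ≥ -(v - u) u'`, which tends to `0` because `u'` is bounded (as `u''` is, by the
equation).
-/

open Set

/-- A positive solution of `-d u'' = u (f - λ u)` on `(0, l)` with `u(0) = 0`,
`u(l) = K`. -/
def IsTruncKSol (d lam l K : ℝ) (f u u' u'' : ℝ → ℝ) : Prop :=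
  ContinuousOn u (Icc 0 l) ∧ u 0 = 0 ∧ u l = K ∧
  (∀ x ∈ Ioo (0:ℝ) l, 0 < u x) ∧
  (∀ x ∈ Ioo (0:ℝ) l, HasDerivAt u (u' x) x) ∧
  (∀ x ∈ Ioo (0:ℝ) l, HasDerivAt u' (u'' x) x) ∧
  (∀ x ∈ Ioo (0:ℝ) l, -(d * u'' x) = u x * (f x - lam * u x))

open Filter Topology

theorem IsLocalMax.hasDerivAt2_nonpos {g g' : ℝ → ℝ} {x₀ c : ℝ} (h : IsLocalMax g x₀)
    (hg : ∀ᶠ x in 𝓝 x₀, HasDerivAt g (g' x) x) (hg' : HasDerivAt g' c x₀) : c ≤ 0 := by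
  by_contra! hc
  have hderiv : deriv g =ᶠ[𝓝 x₀] g' := hg.mono fun x hx => hx.deriv
  have hmin : IsLocalMin g x₀ :=
    isLocalMin_of_deriv_deriv_pos (by rwa [(hg'.congr_of_eventuallyEq hderiv).deriv])
      (by rw [hderiv.eq_of_nhds]; exact h.hasDerivAt_eq_zero hg.self_of_nhds)
      hg.self_of_nhds.continuousAt
  have hconst : g =ᶠ[𝓝 x₀] fun _ => g x₀ := by
    filter_upwards [h, hmin] with x h₁ h₂ using le_antisymm h₁ h₂
  have hzero : (fun _ => (0 : ℝ)) =ᶠ[𝓝 x₀] g' := by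
    filter_upwards [hderiv, hconst.deriv] with x h₁ h₂
    rw [← h₁, h₂, deriv_const]
  exact hc.ne ((hasDerivAt_const x₀ 0).unique (hg'.congr_of_eventuallyEq hzero))

theorem IsMinOn.hasDerivAt_nonpos_of_Icc {g : ℝ → ℝ} {g' a b : ℝ}
    (h : IsMinOn g (Icc a b) b) (hab : a < b) (hg : HasDerivAt g g' b) : g' ≤ 0 := by
  have := h.localize.hasFDerivWithinAt_nonneg hg.hasDerivWithinAt.hasFDerivWithinAt
    (sub_mem_posTangentConeAt_of_segment_subset
      ((convex_Icc a b).segment_subset (right_mem_Icc.2 hab.le) (left_mem_Icc.2 hab.le)))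
  simp only [ContinuousLinearMap.toSpanSingleton_apply, smul_eq_mul] at this
  exact nonpos_of_mul_nonneg_right this (sub_neg.2 hab)

theorem frequently_deriv_pos_nhdsGT {g g' : ℝ → ℝ} {a b : ℝ} (hab : a < b)
    (hcont : ContinuousOn g (Icc a b)) (hg : ∀ x ∈ Ioo a b, HasDerivAt g (g' x) x)
    (hpos : ∀ x ∈ Ioc a b, g a < g x) : ∃ᶠ x in 𝓝[>] a, 0 < g' x := by
  rw [frequently_iff]
  intro U hU
  obtain ⟨y, hay, hyU⟩ := mem_nhdsGT_iff_exists_Ioo_subset.1 hU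
  have haz : a < min y b := lt_min hay hab
  obtain ⟨ξ, hξ, hξ_eq⟩ := exists_hasDerivAt_eq_slope g g' haz
    (hcont.mono (Icc_subset_Icc_right (min_le_right _ _)))
    (fun x hx => hg x ⟨hx.1, hx.2.trans_le (min_le_right _ _)⟩)
  refine ⟨ξ, hyU ⟨hξ.1, hξ.2.trans_le (min_le_left _ _)⟩, ?_⟩
  rw [hξ_eq]
  exact div_pos (sub_pos.2 (hpos _ ⟨haz, min_le_right _ _⟩)) (sub_pos.2 haz)

theorem exists_wronskian_gt {u u' v v' : ℝ → ℝ} {a x M ε : ℝ} (hax : a < x)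
    (hcont : ContinuousOn (fun y => v y - u y) (Icc a x))
    (hu : ∀ y ∈ Ioo a x, HasDerivAt u (u' y) y) (hv : ∀ y ∈ Ioo a x, HasDerivAt v (v' y) y)
    (hva : v a = u a) (huv : ∀ y ∈ Ioc a x, u y < v y) (hu_pos : ∀ y ∈ Ioo a x, 0 < u y)
    (hM : ∀ y ∈ Ioo a x, u' y ≤ M) (hε : 0 < ε) :
    ∃ y ∈ Ioo a x, -ε < u y * v' y - v y * u' y := by
  have hfreq : ∃ᶠ y in 𝓝[>] a, 0 < v' y - u' y :=
    frequently_deriv_pos_nhdsGT hax hcont (fun y hy => (hv y hy).sub (hu y hy))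
      (fun y hy => by simpa [hva] using huv y hy)
  have hlim : Tendsto (fun y => v y - u y) (𝓝[>] a) (𝓝 0) := by
    have := ((hcont a (left_mem_Icc.2 hax.le)).mono Ioo_subset_Icc_self).tendsto
    rwa [nhdsWithin_Ioo_eq_nhdsGT hax, hva, sub_self] at this
  have hsmall : ∀ᶠ y in 𝓝[>] a, M * (v y - u y) < ε :=
    (hlim.const_mul M).eventually (gt_mem_nhds (by simpa using hε))
  obtain ⟨y, hy_deriv, hy_small, hy⟩ :=
    (hfreq.and_eventually (hsmall.and (Ioo_mem_nhdsGT hax))).exists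
  have h₁ := mul_pos (hu_pos y hy) hy_deriv
  have h₂ := mul_nonneg (sub_pos.2 (huv y ⟨hy.1, hy.2.le⟩)).le (sub_nonneg.2 (hM y hy))
  exact ⟨y, hy, by nlinarith⟩

theorem exists_mem_Ico_eq_zero_forall_Ioc_pos {g : ℝ → ℝ} {p x : ℝ} (hpx : p ≤ x)
    (hg : ContinuousOn g (Icc p x)) (hp : g p ≤ 0) (hx : 0 < g x) :
    ∃ a ∈ Ico p x, g a = 0 ∧ ∀ y ∈ Ioc a x, 0 < g y := by
  have hS : IsCompact (Icc p x ∩ g ⁻¹' Iic 0) :=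
    isCompact_Icc.of_isClosed_subset
      (hg.preimage_isClosed_of_isClosed isClosed_Icc isClosed_Iic) inter_subset_left
  obtain ⟨a, ⟨ha, hga⟩, ha_max⟩ := hS.exists_isGreatest ⟨p, left_mem_Icc.2 hpx, hp⟩
  have hax : a < x := ha.2.lt_of_ne (by rintro rfl; exact hx.not_ge hga)
  have hpos : ∀ y ∈ Ioc a x, 0 < g y := fun y hy =>
    lt_of_not_ge fun hgy => (ha_max ⟨⟨ha.1.trans hy.1.le, hy.2⟩, hgy⟩).not_gt hy.1
  obtain ⟨z, hz, hgz⟩ := intermediate_value_Icc hax.le (hg.mono (Icc_subset_Icc_left ha.1))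
    ⟨hga, hx.le⟩
  have hza : z = a := le_antisymm (ha_max ⟨⟨ha.1.trans hz.1, hz.2⟩, hgz.le⟩) hz.1
  exact ⟨a, ⟨ha.1, hax⟩, hza ▸ hgz, hpos⟩

theorem exists_mem_Ioc_eq_zero_forall_Ico_pos {g : ℝ → ℝ} {x q : ℝ} (hxq : x ≤ q)
    (hg : ContinuousOn g (Icc x q)) (hq : g q ≤ 0) (hx : 0 < g x) :
    ∃ b ∈ Ioc x q, g b = 0 ∧ ∀ y ∈ Ico x b, 0 < g y := by
  obtain ⟨a, ha, hga, hpos⟩ := exists_mem_Ico_eq_zero_forall_Ioc_pos (g := fun y => g (-y))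
    (neg_le_neg hxq)
    (hg.comp continuousOn_neg fun y hy => ⟨by linarith [hy.2], by linarith [hy.1]⟩)
    (by simpa using hq) (by simpa using hx)
  exact ⟨-a, ⟨by linarith [ha.2], by linarith [ha.1]⟩, hga,
    fun y hy => by simpa using hpos (-y) ⟨by linarith [hy.2], by linarith [hy.1]⟩⟩

theorem lt_max_of_hasDerivAt2_pos {w w' w'' : ℝ → ℝ} {p q c x : ℝ}
    (hcont : ContinuousOn w (Icc p q)) (hw : ∀ y ∈ Ioo p q, HasDerivAt w (w' y) y)
    (hw' : ∀ y ∈ Ioo p q, HasDerivAt w' (w'' y) y)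
    (hconv : ∀ y ∈ Ioo p q, c < w y → 0 < w'' y)
    (hx : x ∈ Ioo p q) (hcx : c < w x) : w x < max (w p) (w q) := by
  have interior_max_le : ∀ z ∈ Ioo p q, IsMaxOn w (Icc p q) z → w z ≤ c := by
    intro z hz hmax
    by_contra! hcz
    have hloc : IsLocalMax w z := hmax.isLocalMax (Icc_mem_nhds hz.1 hz.2)
    exact (hloc.hasDerivAt2_nonpos (eventually_of_mem (Ioo_mem_nhds hz.1 hz.2) hw)
      (hw' z hz)).not_gt (hconv z hz hcz)
  by_contra! hge
  obtain ⟨m, hm, hmax⟩ :=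
    isCompact_Icc.exists_isMaxOn (nonempty_Icc.2 (hx.1.trans hx.2).le) hcont
  have hx_max : w m ≤ max (w p) (w q) → IsMaxOn w (Icc p q) x := fun hm_le y hy =>
    (hmax hy).trans (hm_le.trans hge)
  rcases hm.1.eq_or_lt with rfl | hpm
  · exact (interior_max_le x hx (hx_max (le_max_left _ _))).not_gt hcx
  rcases hm.2.eq_or_lt with rfl | hmq
  · exact (interior_max_le x hx (hx_max (le_max_right _ _))).not_gt hcx
  exact (interior_max_le m ⟨hpm, hmq⟩ hmax).not_gt
    (hcx.trans_le (hmax (Ioo_subset_Icc_self hx)))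

theorem ConvexOn.antitoneOn_of_bddAbove {g : ℝ → ℝ} {a : ℝ} (hg : ConvexOn ℝ (Ici a) g)
    (hbdd : BddAbove (g '' Ici a)) : AntitoneOn g (Ici a) := by
  intro x hx y hy hxy
  by_contra! hlt
  obtain ⟨B, hB⟩ := hbdd
  have hxy' : x < y := hxy.lt_of_ne (by rintro rfl; exact hlt.false)
  set s := (g y - g x) / (y - x)
  have hs : 0 < s := div_pos (sub_pos.2 hlt) (sub_pos.2 hxy')
  have hgy : g y ≤ B := hB (mem_image_of_mem g hy)
  set z := y + (B - g y + 1) / s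
  have hyz : y < z := lt_add_of_pos_right _ (div_pos (by linarith) hs)
  have hz : z ∈ Ici a := hy.trans hyz.le
  have hslope : s ≤ (g z - g y) / (z - y) := hg.slope_mono_adjacent hx hz hxy' hyz
  rw [le_div_iff₀ (sub_pos.2 hyz), show z - y = (B - g y + 1) / s by ring,
    mul_div_cancel₀ _ hs.ne'] at hslope
  linarith [hB (mem_image_of_mem g hz)]

theorem exists_abs_le_of_abs_deriv_le {w w' : ℝ → ℝ} {p q C : ℝ}
    (hw : ∀ x ∈ Ioo p q, HasDerivAt w (w' x) x) (hC : ∀ x ∈ Ioo p q, |w' x| ≤ C) :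
    ∃ M, ∀ x ∈ Ioo p q, |w x| ≤ M := by
  rcases (Ioo p q).eq_empty_or_nonempty with h | ⟨x₀, hx₀⟩
  · exact ⟨0, by simp [h]⟩
  refine ⟨|w x₀| + C * (q - p), fun x hx => ?_⟩
  have hlip := (convex_Ioo p q).norm_image_sub_le_of_norm_hasDerivWithin_le
    (fun y hy => (hw y hy).hasDerivWithinAt) hC hx₀ hx
  have hdist : |x - x₀| ≤ q - p :=
    abs_sub_le_iff.2 ⟨by linarith [hx.2, hx₀.1], by linarith [hx.1, hx₀.2]⟩
  have hC0 : 0 ≤ C := (abs_nonneg _).trans (hC x₀ hx₀)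
  simp only [Real.norm_eq_abs] at hlip
  linarith [abs_sub_abs_le_abs_sub (w x) (w x₀), mul_le_mul_of_nonneg_left hdist hC0]

def SolvesLogisticOn (d lam : ℝ) (f u u' u'' : ℝ → ℝ) (s : Set ℝ) : Prop :=
  ∀ x ∈ s, HasDerivAt u (u' x) x ∧ HasDerivAt u' (u'' x) x ∧
    -(d * u'' x) = u x * (f x - lam * u x)

namespace SolvesLogisticOn

variable {d lam : ℝ} {f u u' u'' v v' v'' : ℝ → ℝ} {s : Set ℝ}

theorem mono (hu : SolvesLogisticOn d lam f u u' u'' s) {t : Set ℝ} (hts : t ⊆ s) :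
    SolvesLogisticOn d lam f u u' u'' t :=
  fun x hx => hu x (hts hx)

theorem second_deriv_pos_of_div_lt (hu : SolvesLogisticOn d lam f u u' u'' s) (hd : 0 < d)
    (hlam : 0 < lam) {F x : ℝ} (hx : x ∈ s) (hfx : f x ≤ F) (hux : 0 < u x)
    (hFu : F / lam < u x) : 0 < u'' x := by
  have hF : F < lam * u x := (div_lt_iff₀' hlam).1 hFu
  have hrhs : u x * (f x - lam * u x) < 0 := mul_neg_of_pos_of_neg hux (by linarith)
  have hode := (hu x hx).2.2
  exact pos_of_mul_pos_right (by linarith : 0 < d * u'' x) hd.le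

theorem hasDerivAt_wronskian (hu : SolvesLogisticOn d lam f u u' u'' s)
    (hv : SolvesLogisticOn d lam f v v' v'' s) (hd : d ≠ 0) {x : ℝ} (hx : x ∈ s) :
    HasDerivAt (fun y => u y * v' y - v y * u' y) (lam / d * (u x * v x * (v x - u x))) x := by
  obtain ⟨hu', hu'', hu_eq⟩ := hu x hx
  obtain ⟨hv', hv'', hv_eq⟩ := hv x hx
  refine ((hu'.mul hv'').sub (hv'.mul hu'')).congr_deriv ?_
  rw [div_mul_eq_mul_div, eq_div_iff hd]
  linear_combination (-u x) * hv_eq + v x * hu_eq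

theorem strictMonoOn_wronskian {a b : ℝ} (hu : SolvesLogisticOn d lam f u u' u'' (Ioc a b))
    (hv : SolvesLogisticOn d lam f v v' v'' (Ioc a b)) (hd : 0 < d) (hlam : 0 < lam)
    (hu_pos : ∀ x ∈ Ioo a b, 0 < u x) (huv : ∀ x ∈ Ioo a b, u x < v x) :
    StrictMonoOn (fun y => u y * v' y - v y * u' y) (Ioc a b) := by
  have hW := fun x (hx : x ∈ Ioc a b) => hu.hasDerivAt_wronskian hv hd.ne' hx
  refine strictMonoOn_of_hasDerivWithinAt_pos (convex_Ioc a b)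
    (f' := fun x => lam / d * (u x * v x * (v x - u x)))
    (fun x hx => (hW x hx).continuousAt.continuousWithinAt) (fun x hx => ?_) (fun x hx => ?_) <;>
    rw [interior_Ioc] at hx
  · exact (hW x (Ioo_subset_Ioc_self hx)).hasDerivWithinAt
  · have hux := hu_pos x hx
    exact mul_pos (div_pos hlam hd) (mul_pos (mul_pos hux (hux.trans (huv x hx)))
      (sub_pos.2 (huv x hx)))

theorem exists_abs_deriv_le {p q C : ℝ} (hu : SolvesLogisticOn d lam f u u' u'' (Ioo p q))
    (hd : d ≠ 0) (hcont : ContinuousOn u (Icc p q)) (hf : ∀ x ∈ Ioo p q, |f x| ≤ C) :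
    ∃ M, ∀ x ∈ Ioo p q, |u' x| ≤ M := by
  obtain ⟨Cu, hCu⟩ := isCompact_Icc.exists_bound_of_continuousOn hcont
  refine exists_abs_le_of_abs_deriv_le (fun x hx => (hu x hx).2.1)
    (C := Cu * (C + |lam| * Cu) / |d|) fun x hx => ?_
  have hux : |u x| ≤ Cu := hCu x (Ioo_subset_Icc_self hx)
  have hbound : |f x - lam * u x| ≤ C + |lam| * Cu := by
    calc |f x - lam * u x| ≤ |f x| + |lam| * |u x| := by rw [← abs_mul]; exact abs_sub _ _
      _ ≤ C + |lam| * Cu := by gcongr; exact hf x hx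
  rw [le_div_iff₀ (abs_pos.2 hd), mul_comm, ← abs_mul, ← abs_neg, (hu x hx).2.2, abs_mul]
  exact mul_le_mul hux hbound (abs_nonneg _) ((abs_nonneg _).trans hux)

theorem le_div_of_bddAbove (hu : SolvesLogisticOn d lam f u u' u'' (Ioi 0)) (hd : 0 < d)
    (hlam : 0 < lam) {F : ℝ} (hF₀ : 0 ≤ F) (hF : ∀ x ∈ Ioi 0, f x ≤ F)
    (hcont : ContinuousOn u (Ici 0)) (h0 : u 0 = 0) (hbdd : BddAbove (u '' Ici 0)) {x : ℝ}
    (hx : 0 ≤ x) : u x ≤ F / lam := by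
  have hc : 0 ≤ F / lam := div_nonneg hF₀ hlam.le
  have hconv : ∀ y ∈ Ioi 0, F / lam < u y → 0 < u'' y := fun y hy hcy =>
    hu.second_deriv_pos_of_div_lt hd hlam hy (hF y hy) (hc.trans_lt hcy) hcy
  by_contra! hcx
  have hx₀ : 0 < x := hx.lt_of_ne (by rintro rfl; linarith)
  have hgrow : ∀ y, x < y → u x < u y := fun y hxy => by
    have := lt_max_of_hasDerivAt2_pos (hcont.mono Icc_subset_Ici_self)
      (fun z hz => (hu z hz.1).1) (fun z hz => (hu z hz.1).2.1) (fun z hz => hconv z hz.1)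
      ⟨hx₀, hxy⟩ hcx
    rw [h0, lt_max_iff] at this
    exact this.resolve_left (by linarith)
  have hconvex : ConvexOn ℝ (Ici x) u := by
    refine convexOn_of_hasDerivWithinAt2_nonneg (convex_Ici x) (hcont.mono (Ici_subset_Ici.2 hx))
      (f' := u') (f'' := u'') (fun y hy => ?_) (fun y hy => ?_) (fun y hy => ?_) <;>
      simp only [interior_Ici] at hy ⊢
    · exact (hu y (hx₀.trans hy)).1.hasDerivWithinAt
    · exact (hu y (hx₀.trans hy)).2.1.hasDerivWithinAt
    · exact (hconv y (hx₀.trans hy) (hcx.trans (hgrow y hy))).le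
  have hanti := hconvex.antitoneOn_of_bddAbove (hbdd.mono (image_mono (Ici_subset_Ici.2 hx)))
  exact (hgrow (x + 1) (by linarith)).not_ge
    (hanti self_mem_Ici (show x ≤ x + 1 by linarith) (by linarith))

theorem le_of_le_left_of_lt_right {p q C : ℝ}
    (hu : SolvesLogisticOn d lam f u u' u'' (Ioo p q))
    (hv : SolvesLogisticOn d lam f v v' v'' (Ioo p q)) (hd : 0 < d) (hlam : 0 < lam)
    (hf : ∀ x ∈ Ioo p q, |f x| ≤ C) (hu_cont : ContinuousOn u (Icc p q))
    (hv_cont : ContinuousOn v (Icc p q)) (hu_pos : ∀ x ∈ Ioo p q, 0 < u x) (hp : v p ≤ u p)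
    (hq : v q < u q) {x : ℝ} (hx : x ∈ Icc p q) : v x ≤ u x := by
  by_contra! hux
  set g := fun y => v y - u y with hg
  have hg_cont : ContinuousOn g (Icc p q) := hv_cont.sub hu_cont
  obtain ⟨a, ha, hga, hg_pos_left⟩ := exists_mem_Ico_eq_zero_forall_Ioc_pos hx.1
    (hg_cont.mono (Icc_subset_Icc_right hx.2)) (sub_nonpos.2 hp) (sub_pos.2 hux)
  obtain ⟨b, hb, hgb, hg_pos_right⟩ := exists_mem_Ioc_eq_zero_forall_Ico_pos hx.2
    (hg_cont.mono (Icc_subset_Icc_left hx.1)) (sub_neg.2 hq).le (sub_pos.2 hux)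
  have hbq : b < q := hb.2.lt_of_ne (by rintro rfl; simp only [hg] at hgb; linarith)
  have hab : Ioc a b ⊆ Ioo p q := fun y hy => ⟨ha.1.trans_lt hy.1, hy.2.trans_lt hbq⟩
  have hax : Ioo a x ⊆ Ioo p q := fun y hy => hab ⟨hy.1, hy.2.le.trans hb.1.le⟩
  have hb_mem : b ∈ Ioo p q := hab ⟨ha.2.trans hb.1, le_rfl⟩
  have hg_pos : ∀ y ∈ Ioo a b, 0 < g y := fun y hy =>
    (le_or_gt y x).elim (fun hyx => hg_pos_left y ⟨hy.1, hyx⟩)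
      (fun hxy => hg_pos_right y ⟨hxy.le, hy.2⟩)
  set W := fun y => u y * v' y - v y * u' y
  have hW_mono : StrictMonoOn W (Ioc a b) := (hu.mono hab).strictMonoOn_wronskian (hv.mono hab)
    hd hlam (fun y hy => hu_pos y (hab (Ioo_subset_Ioc_self hy)))
    (fun y hy => sub_pos.1 (hg_pos y hy))
  have hWb : W b ≤ 0 := by
    have hbmin : IsMinOn g (Icc x b) b := isMinOn_iff.2 fun y hy => by
      rcases hy.2.eq_or_lt with rfl | hyb
      · exact le_rfl
      · exact hgb ▸ (hg_pos_right y ⟨hy.1, hyb⟩).le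
    have hg'b := hbmin.hasDerivAt_nonpos_of_Icc hb.1 ((hv b hb_mem).1.sub (hu b hb_mem).1)
    have hvb : v b = u b := by simp only [hg] at hgb; linarith
    simp only [W, hvb]
    nlinarith [hu_pos b hb_mem]
  have hWx : W x < 0 :=
    (hW_mono ⟨ha.2, hb.1.le⟩ ⟨ha.2.trans hb.1, le_rfl⟩ hb.1).trans_le hWb
  obtain ⟨M, hM⟩ := hu.exists_abs_deriv_le hd.ne' hu_cont hf
  obtain ⟨y, hy, hWy⟩ := exists_wronskian_gt ha.2 (hg_cont.mono (Icc_subset_Icc ha.1 hx.2))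
    (fun y hy => (hu y (hax hy)).1) (fun y hy => (hv y (hax hy)).1) (by linarith)
    (fun y hy => sub_pos.1 (hg_pos_left y hy)) (fun y hy => hu_pos y (hax hy))
    (fun y hy => (le_abs_self _).trans (hM y (hax hy))) (neg_pos.2 hWx)
  exact (hW_mono ⟨hy.1, hy.2.le.trans hb.1.le⟩ ⟨ha.2, hb.1.le⟩ hy.2).not_gt
    (by simpa using hWy)

end SolvesLogisticOn

theorem IsTruncKSol.solvesLogisticOn {d lam l K : ℝ} {f u u' u'' : ℝ → ℝ}
    (hu : IsTruncKSol d lam l K f u u' u'') : SolvesLogisticOn d lam f u u' u'' (Ioo 0 l) :=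
  fun x hx => by
    obtain ⟨-, -, -, -, hu', hu'', hode⟩ := hu
    exact ⟨hu' x hx, hu'' x hx, hode x hx⟩

theorem IsTruncKSol.lt_of_mem_Ioo {d lam l K F : ℝ} {f u u' u'' : ℝ → ℝ}
    (hu : IsTruncKSol d lam l K f u u' u'') (hd : 0 < d) (hlam : 0 < lam)
    (hF : ∀ x ∈ Ioo 0 l, f x ≤ F) (hK : F / lam < K) {x : ℝ} (hx : x ∈ Ioo 0 l) :
    u x < K := by
  have hsol := hu.solvesLogisticOn
  obtain ⟨hcont, h0, hl, hpos, -, -, -⟩ := hu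
  rcases le_or_gt (u x) (F / lam) with hle | hgt
  · linarith
  have := lt_max_of_hasDerivAt2_pos hcont (fun y hy => (hsol y hy).1)
    (fun y hy => (hsol y hy).2.1)
    (fun y hy hcy => hsol.second_deriv_pos_of_div_lt hd hlam hy (hF y hy) (hpos y hy) hcy)
    hx hgt
  rw [h0, hl, lt_max_iff] at this
  exact this.resolve_left (hpos x hx).not_gt

theorem stmt7_general (d lam K F f₀ : ℝ) (hd : 0 < d) (hlam : 0 < lam) (hf₀ : 0 < f₀)
    (f : ℝ → ℝ)
    (hf_lb : ∀ x ∈ Ici (0:ℝ), f₀ ≤ f x) (hf_ub : ∀ x ∈ Ici (0:ℝ), f x ≤ F)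
    (hK : F / lam < K)
    (uhat uhat' uhat'' : ℝ → ℝ)
    (hhat_cont : ContinuousOn uhat (Ici 0)) (hhat0 : uhat 0 = 0)
    (B : ℝ) (hhat_bdd : ∀ x ∈ Ici (0:ℝ), uhat x ≤ B)
    (hhat' : ∀ x ∈ Ioi (0:ℝ), HasDerivAt uhat (uhat' x) x)
    (hhat'' : ∀ x ∈ Ioi (0:ℝ), HasDerivAt uhat' (uhat'' x) x)
    (hhat_ode : ∀ x ∈ Ioi (0:ℝ), -(d * uhat'' x) = uhat x * (f x - lam * uhat x)) :
    (∀ l, 0 < l → ∀ u u' u'', IsTruncKSol d lam l K f u u' u'' →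
      ∀ x ∈ Icc (0:ℝ) l, uhat x ≤ u x) ∧
    (∀ l₁ l₂, 0 < l₁ → l₁ < l₂ →
      ∀ u₁ u₁' u₁'' u₂ u₂' u₂'', IsTruncKSol d lam l₁ K f u₁ u₁' u₁'' →
        IsTruncKSol d lam l₂ K f u₂ u₂' u₂'' →
        ∀ x ∈ Icc (0:ℝ) l₁, u₂ x ≤ u₁ x) := by
  have hf_pos : ∀ x ∈ Ioi (0:ℝ), 0 < f x := fun x hx =>
    hf₀.trans_le (hf_lb x (Ioi_subset_Ici_self hx))
  have hf_le : ∀ x ∈ Ioi (0:ℝ), f x ≤ F := fun x hx => hf_ub x (Ioi_subset_Ici_self hx)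
  have hf_abs : ∀ x ∈ Ioi (0:ℝ), |f x| ≤ F := fun x hx =>
    (abs_of_pos (hf_pos x hx)).trans_le (hf_le x hx)
  have hF₀ : 0 ≤ F := (hf₀.trans_le (hf_lb 0 self_mem_Ici)).le.trans (hf_ub 0 self_mem_Ici)
  have hhat : SolvesLogisticOn d lam f uhat uhat' uhat'' (Ioi 0) :=
    fun x hx => ⟨hhat' x hx, hhat'' x hx, hhat_ode x hx⟩
  have hhat_le : ∀ x ∈ Ici (0:ℝ), uhat x ≤ F / lam := fun x hx =>
    hhat.le_div_of_bddAbove hd hlam hF₀ hf_le hhat_cont hhat0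
      ⟨B, by rintro _ ⟨y, hy, rfl⟩; exact hhat_bdd y hy⟩ hx
  constructor
  · intro l hl u u' u'' hu x hx
    have hsol := hu.solvesLogisticOn
    obtain ⟨hcont, h0, hlK, hpos, -⟩ := hu
    exact hsol.le_of_le_left_of_lt_right (hhat.mono fun y hy => hy.1) hd hlam
      (fun y hy => hf_abs y hy.1) hcont (hhat_cont.mono Icc_subset_Ici_self) hpos
      (by rw [hhat0, h0]) (by linarith [hhat_le l hl.le]) hx
  · intro l₁ l₂ hl₁ hl₁₂ u₁ u₁' u₁'' u₂ u₂' u₂'' hu₁ hu₂ x hx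
    have hu₂_lt : u₂ l₁ < K :=
      hu₂.lt_of_mem_Ioo hd hlam (fun y hy => hf_le y hy.1) hK ⟨hl₁, hl₁₂⟩
    have hsol₁ := hu₁.solvesLogisticOn
    have hsol₂ := hu₂.solvesLogisticOn.mono (Ioo_subset_Ioo_right hl₁₂.le)
    obtain ⟨hcont₁, h0₁, hlK₁, hpos₁, -⟩ := hu₁
    obtain ⟨hcont₂, h0₂, -⟩ := hu₂
    exact hsol₁.le_of_le_left_of_lt_right hsol₂ hd hlam (fun y hy => hf_abs y hy.1) hcont₁
      (hcont₂.mono (Icc_subset_Icc_right hl₁₂.le)) hpos₁ (by rw [h0₁, h0₂]) (by linarith) hx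

/-- the truncated solutions with boundary value `K > (sup f)/λ`
dominate the half-line solution `û` and are nonincreasing in `l`. -/
theorem stmt7 (d lam K F f₀ : ℝ) (hd : 0 < d) (hlam : 0 < lam) (hf₀ : 0 < f₀)
    (f : ℝ → ℝ) (hf_cont : ContinuousOn f (Ici 0))
    (hf_lb : ∀ x ∈ Ici (0:ℝ), f₀ ≤ f x) (hf_ub : ∀ x ∈ Ici (0:ℝ), f x ≤ F)
    (hK : F / lam < K)
    (uhat uhat' uhat'' : ℝ → ℝ)
    (hhat_cont : ContinuousOn uhat (Ici 0)) (hhat0 : uhat 0 = 0)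
    (hhat_pos : ∀ x ∈ Ioi (0:ℝ), 0 < uhat x)
    (B : ℝ) (hhat_bdd : ∀ x ∈ Ici (0:ℝ), uhat x ≤ B)
    (hhat' : ∀ x ∈ Ioi (0:ℝ), HasDerivAt uhat (uhat' x) x)
    (hhat'' : ∀ x ∈ Ioi (0:ℝ), HasDerivAt uhat' (uhat'' x) x)
    (hhat_ode : ∀ x ∈ Ioi (0:ℝ), -(d * uhat'' x) = uhat x * (f x - lam * uhat x)) :
    (∀ l, 0 < l → ∀ u u' u'', IsTruncKSol d lam l K f u u' u'' →
      ∀ x ∈ Icc (0:ℝ) l, uhat x ≤ u x) ∧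
    (∀ l₁ l₂, 0 < l₁ → l₁ < l₂ →
      ∀ u₁ u₁' u₁'' u₂ u₂' u₂'', IsTruncKSol d lam l₁ K f u₁ u₁' u₁'' →
        IsTruncKSol d lam l₂ K f u₂ u₂' u₂'' →
        ∀ x ∈ Icc (0:ℝ) l₁, u₂ x ≤ u₁ x) :=
  stmt7_general d lam K F f₀ hd hlam hf₀ f hf_lb hf_ub hK uhat uhat' uhat'' hhat_cont hhat0 B
    hhat_bdd hhat' hhat'' hhat_ode
end
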